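/- arXiv:2403.12874 — 5 statements merged into one kernel-verified Lean document; each statement's English description precedes it below -/
import Mathlib

section
/- Let α > 0 and let B be a set of positive integers satisfying the c-condition. Define the truncated representation function f_α(n) = #{(p,b) : p prime, b ∈ B, b < (log n)^{1/α}, n = p + b}. Then there exists a constant C > 0 (depending on c, κ and α) such that ∑_{n ≤ x} f_α(n) ≥ C·(x/log x)·B((log x)^{1/α}) for all sufficiently large x. -/
open Filter Real

/-- `cnt B x` is the number of elements of `B` in the interval `[1, x]`. -/
noncomputable def cnt (B : Set ℕ) (x : ℝ) : ℕ :=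
  {n : ℕ | n ∈ B ∧ 1 ≤ n ∧ (n : ℝ) ≤ x}.ncard

/-- `B` satisfies the `c`-condition: there are `0 < c < 1` and `κ > 0` with
`B(cx) ≥ κ·B(x)` for all sufficiently large `x`. -/
def CCondition (B : Set ℕ) : Prop :=
  ∃ c κ : ℝ, 0 < c ∧ c < 1 ∧ 0 < κ ∧
    ∀ᶠ x : ℝ in atTop, κ * (cnt B x : ℝ) ≤ (cnt B (c * x) : ℝ)

/-- The truncated representation function
`f_α(n) = #{(p, b) : p prime, b ∈ B, b < (log n)^(1/α), n = p + b}`. -/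
noncomputable def repTrunc (B : Set ℕ) (α : ℝ) (n : ℕ) : ℕ :=
  {pb : ℕ × ℕ | pb.1.Prime ∧ pb.2 ∈ B ∧
    (pb.2 : ℝ) < (Real.log n) ^ ((1 : ℝ) / α) ∧ n = pb.1 + pb.2}.ncard


lemma centralBinom_le_pow (n : ℕ) (hn : 0 < n) :
    Nat.centralBinom n ≤ (2 * n) ^ (Nat.primeCounting (2 * n)) := by
  have hb : n.centralBinom ≠ 0 := (Nat.centralBinom_pos n).ne'
  have h2n : 0 < 2 * n := by omega
  have hpi : Nat.primeCounting (2 * n) =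
      ((Finset.range (2 * n + 1)).filter Nat.Prime).card := by
    rw [Nat.primeCounting, Nat.primeCounting', Nat.count_eq_card_filter_range]
  have hsub : (n.centralBinom).factorization.support ⊆
      (Finset.range (2 * n + 1)).filter Nat.Prime := by
    intro p hp
    have hpp : p.Prime := Nat.prime_of_mem_primeFactors (by simpa using hp)
    have hk : 1 ≤ (n.centralBinom).factorization p := by
      have := (Nat.support_factorization _ ▸ hp)
      exact Nat.one_le_iff_ne_zero.mpr (Finsupp.mem_support_iff.mp hp)
    have hple : p ≤ 2 * n := by
      calc p = p ^ 1 := (pow_one p).symm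
        _ ≤ p ^ ((n.centralBinom).factorization p) :=
          Nat.pow_le_pow_right hpp.pos hk
        _ ≤ 2 * n := by
          rw [Nat.centralBinom]
          exact Nat.pow_factorization_choose_le h2n
    simp [Finset.mem_filter, Finset.mem_range, hpp]; omega
  calc n.centralBinom = (n.centralBinom).factorization.prod (· ^ ·) :=
        (Nat.factorization_prod_pow_eq_self hb).symm
    _ ≤ ∏ p ∈ (n.centralBinom).factorization.support, (2 * n) := by
        rw [Finsupp.prod]
        refine Finset.prod_le_prod' fun p hp => ?_
        exact Nat.pow_factorization_choose_le h2n
    _ = (2 * n) ^ (n.centralBinom).factorization.support.card := by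
        rw [Finset.prod_const]
    _ ≤ (2 * n) ^ (Nat.primeCounting (2 * n)) := by
        apply Nat.pow_le_pow_right h2n
        rw [hpi]
        exact Finset.card_le_card hsub
lemma cheb : ∀ᶠ n : ℕ in atTop, (n : ℝ) ≤ (Nat.primeCounting (2 * n) : ℝ) * Real.log (2 * n) := by
  have hlog6 : ∀ᶠ y : ℝ in atTop, Real.log y ≤ y / 6 := by
    have h := (isLittleO_log_id_atTop.def (by norm_num : (0:ℝ) < 1/6))
    filter_upwards [h, eventually_ge_atTop (1:ℝ)] with y hy hy1
    have := le_abs_self (Real.log y)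
    simp only [Real.norm_eq_abs, id] at hy
    calc Real.log y ≤ |Real.log y| := le_abs_self _
      _ ≤ 1/6 * |y| := hy
      _ = y / 6 := by rw [abs_of_nonneg (by linarith)]; ring
  have hcomp : ∀ᶠ n : ℕ in atTop, Real.log (2 * n) ≤ (n : ℝ) / 3 := by
    have ht : Tendsto (fun n : ℕ => (2 * n : ℝ)) atTop atTop := by
      apply Tendsto.const_mul_atTop (by norm_num : (0:ℝ) < 2) tendsto_natCast_atTop_atTop
    filter_upwards [ht.eventually hlog6] with n hn
    calc Real.log (2 * n) ≤ (2 * n : ℝ) / 6 := hn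
      _ = (n : ℝ) / 3 := by ring
  filter_upwards [hcomp, eventually_ge_atTop 4] with n hlogn hn4
  have hn : 0 < n := by omega
  have h1 : (4:ℕ) ^ n ≤ (2 * n) ^ (Nat.primeCounting (2 * n) + 1) := by
    calc (4:ℕ) ^ n ≤ n * Nat.centralBinom n := (Nat.four_pow_lt_mul_centralBinom n hn4).le
      _ ≤ (2 * n) * ((2 * n) ^ (Nat.primeCounting (2 * n))) := by
          apply Nat.mul_le_mul (by omega) (centralBinom_le_pow n hn)
      _ = (2 * n) ^ (Nat.primeCounting (2 * n) + 1) := by ring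
  have h2 : (n : ℝ) * Real.log 4 ≤ (Nat.primeCounting (2 * n) + 1 : ℝ) * Real.log (2 * n) := by
    have hc : ((4:ℝ)) ^ n ≤ ((2 * n : ℕ) : ℝ) ^ (Nat.primeCounting (2 * n) + 1) := by
      exact_mod_cast h1
    have hl := Real.log_le_log (by positivity) hc
    rw [Real.log_pow, Real.log_pow] at hl
    push_cast at hl ⊢
    convert hl using 3 <;> push_cast <;> ring
  have hlog4 : (4:ℝ)/3 ≤ Real.log 4 := by
    have h2' : Real.log 4 = 2 * Real.log 2 := by
      rw [show (4:ℝ) = 2^2 by norm_num, Real.log_pow]; push_cast; ring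
    have := Real.log_two_gt_d9
    nlinarith
  have hlogpos : 0 ≤ Real.log (2 * n) := by
    apply Real.log_nonneg; push_cast; nlinarith [(Nat.one_le_cast (α := ℝ)).mpr hn]
  push_cast at h2 hlogn
  nlinarith [Nat.cast_nonneg (Nat.primeCounting (2 * n)) (α := ℝ)]


lemma cc_iter (B : Set ℕ) (c κ : ℝ) (hc : 0 < c) (hκ : 0 < κ)
    (h : ∀ᶠ x : ℝ in atTop, κ * (cnt B x : ℝ) ≤ (cnt B (c * x) : ℝ)) :
    ∀ k : ℕ, ∀ᶠ x : ℝ in atTop, κ ^ k * (cnt B x : ℝ) ≤ (cnt B (c ^ k * x) : ℝ) := by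
  intro k
  induction k with
  | zero => simp
  | succ k ih =>
    have ht : Tendsto (fun x : ℝ => c ^ k * x) atTop atTop :=
      Tendsto.const_mul_atTop (pow_pos hc k) tendsto_id
    filter_upwards [ih, ht.eventually h] with x h1 h2
    have e : c * (c ^ k * x) = c ^ (k + 1) * x := by ring
    rw [e] at h2
    calc κ ^ (k+1) * (cnt B x : ℝ) = κ * (κ ^ k * (cnt B x : ℝ)) := by ring
      _ ≤ κ * (cnt B (c ^ k * x) : ℝ) := by nlinarith
      _ ≤ (cnt B (c ^ (k+1) * x) : ℝ) := h2
lemma core (B : Set ℕ) (α : ℝ) (N : ℕ) (P Bf : Finset ℕ)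
    (hP : ∀ p ∈ P, p.Prime) (hBf : ∀ b ∈ Bf, b ∈ B)
    (hlt : ∀ p ∈ P, ∀ b ∈ Bf, (b : ℝ) < (Real.log (p + b : ℕ)) ^ ((1:ℝ)/α))
    (hle : ∀ p ∈ P, ∀ b ∈ Bf, p + b ≤ N) :
    P.card * Bf.card ≤ ∑ n ∈ Finset.Icc 1 N, repTrunc B α n := by
  classical
  set F := P ×ˢ Bf with hF
  have hmap : ∀ pb ∈ F, pb.1 + pb.2 ∈ Finset.Icc 1 N := by
    intro pb hpb
    rw [Finset.mem_product] at hpb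
    have h1 := (hP _ hpb.1).two_le
    have h2 := hle _ hpb.1 _ hpb.2
    simp only [Finset.mem_Icc]; omega
  have hcard : F.card = ∑ n ∈ Finset.Icc 1 N,
      (F.filter (fun pb => pb.1 + pb.2 = n)).card :=
    Finset.card_eq_sum_card_fiberwise hmap
  have hfiber : ∀ n ∈ Finset.Icc 1 N,
      (F.filter (fun pb => pb.1 + pb.2 = n)).card ≤ repTrunc B α n := by
    intro n _
    have hfin : ({pb : ℕ × ℕ | pb.1.Prime ∧ pb.2 ∈ B ∧
        (pb.2 : ℝ) < (Real.log n) ^ ((1 : ℝ) / α) ∧ n = pb.1 + pb.2}).Finite := by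
      apply Set.Finite.subset ((Set.finite_Iic n).prod (Set.finite_Iic n))
      rintro ⟨p, b⟩ ⟨-, -, -, rfl⟩
      constructor <;> simp <;> omega
    have hsub : (↑(F.filter (fun pb => pb.1 + pb.2 = n)) : Set (ℕ × ℕ)) ⊆
        {pb : ℕ × ℕ | pb.1.Prime ∧ pb.2 ∈ B ∧
          (pb.2 : ℝ) < (Real.log n) ^ ((1 : ℝ) / α) ∧ n = pb.1 + pb.2} := by
      rintro ⟨p, b⟩ hpb
      rw [Finset.mem_coe, Finset.mem_filter, Finset.mem_product] at hpb
      obtain ⟨⟨hp, hb⟩, heq⟩ := hpb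
      refine ⟨hP _ hp, hBf _ hb, ?_, heq.symm⟩
      rw [← heq]
      exact hlt _ hp _ hb
    calc (F.filter (fun pb => pb.1 + pb.2 = n)).card
        = (↑(F.filter (fun pb => pb.1 + pb.2 = n)) : Set (ℕ × ℕ)).ncard :=
          (Set.ncard_coe_finset _).symm
      _ ≤ _ := Set.ncard_le_ncard hsub hfin
  calc P.card * Bf.card = F.card := (Finset.card_product P Bf).symm
    _ ≤ _ := hcard ▸ Finset.sum_le_sum hfiber

lemma pi_Ioc (s t : ℕ) :
    Nat.primeCounting t ≤ ((Finset.Ioc s t).filter Nat.Prime).card + (s + 1) := by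
  classical
  have hpi : Nat.primeCounting t = ((Finset.range (t + 1)).filter Nat.Prime).card := by
    rw [Nat.primeCounting, Nat.primeCounting', Nat.count_eq_card_filter_range]
  have hsub : (Finset.range (t + 1)).filter Nat.Prime ⊆
      ((Finset.Ioc s t).filter Nat.Prime) ∪ Finset.range (s + 1) := by
    intro p hp
    rw [Finset.mem_filter, Finset.mem_range] at hp
    rw [Finset.mem_union, Finset.mem_filter, Finset.mem_Ioc, Finset.mem_range]
    rcases le_or_gt p s with h | h
    · right; omega
    · left; exact ⟨⟨h, by omega⟩, hp.2⟩
  calc Nat.primeCounting t = _ := hpi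
    _ ≤ (((Finset.Ioc s t).filter Nat.Prime) ∪ Finset.range (s + 1)).card :=
      Finset.card_le_card hsub
    _ ≤ _ := by
      refine (Finset.card_union_le _ _).trans ?_
      simp
set_option maxHeartbeats 1000000 in
theorem main (α : ℝ) (hα : 0 < α) (B : Set ℕ) (hBpos : ∀ n ∈ B, 0 < n)
    (hcc : ∃ c κ : ℝ, 0 < c ∧ c < 1 ∧ 0 < κ ∧
      ∀ᶠ x : ℝ in atTop, κ * (cnt B x : ℝ) ≤ (cnt B (c * x) : ℝ)) :
    ∃ C : ℝ, 0 < C ∧ ∀ᶠ x : ℝ in atTop,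
      C * (x / Real.log x) * (cnt B ((Real.log x) ^ ((1 : ℝ) / α)) : ℝ) ≤
        ∑ n ∈ Finset.Icc 1 ⌊x⌋₊, (repTrunc B α n : ℝ) := by
  classical
  obtain ⟨c, κ, hc0, hc1, hκ0, hccE⟩ := hcc
  have hhalf : (0:ℝ) < ((1:ℝ)/2) ^ ((1:ℝ)/α) := Real.rpow_pos_of_pos (by norm_num) _
  obtain ⟨k, hk⟩ := exists_pow_lt_of_lt_one hhalf hc1
  refine ⟨κ ^ k / 8, by positivity, ?_⟩
  -- eventuality facts
  have hLt : Tendsto (fun x : ℝ => Real.log x ^ ((1:ℝ)/α)) atTop atTop :=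
    (tendsto_rpow_atTop (by positivity)).comp tendsto_log_atTop
  have hF3 := hLt.eventually (cc_iter B c κ hc0 hκ0 hccE k)
  -- F4 : L ≤ x/2
  have hF4 : ∀ᶠ x : ℝ in atTop, Real.log x ^ ((1:ℝ)/α) ≤ x / 2 := by
    have h := (isLittleO_log_rpow_atTop hα).def (c := ((1:ℝ)/2) ^ α)
      (Real.rpow_pos_of_pos (by norm_num) _)
    filter_upwards [h, eventually_ge_atTop (1:ℝ)] with x hx hx1
    have hx0 : (0:ℝ) < x := by linarith
    have hlog0 : 0 ≤ Real.log x := Real.log_nonneg hx1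
    rw [Real.norm_eq_abs, Real.norm_eq_abs, abs_of_nonneg hlog0,
      abs_of_nonneg (by positivity : (0:ℝ) ≤ x ^ α)] at hx
    have h2 : Real.log x ≤ (x/2) ^ α := by
      have : (x/2 : ℝ) ^ α = ((1:ℝ)/2) ^ α * x ^ α := by
        rw [show (x/2 : ℝ) = (1/2) * x by ring, Real.mul_rpow (by norm_num) hx0.le]
      linarith [hx, this.ge]
    calc Real.log x ^ ((1:ℝ)/α) ≤ ((x/2) ^ α) ^ ((1:ℝ)/α) :=
          Real.rpow_le_rpow hlog0 h2 (by positivity)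
      _ = (x/2) ^ (α * ((1:ℝ)/α)) := (Real.rpow_mul (by linarith) _ _).symm
      _ = x / 2 := by rw [mul_one_div_cancel hα.ne', Real.rpow_one]
  -- F6 : (√x + 1) * log x + 1 ≤ x/8
  have hF6 : ∀ᶠ x : ℝ in atTop, (Real.sqrt x + 1) * Real.log x + 1 ≤ x / 8 := by
    have hsqrt : (fun x : ℝ => Real.sqrt x + 1) =O[atTop] fun x : ℝ => x ^ ((1:ℝ)/2) := by
      apply Asymptotics.IsBigO.of_bound 2
      filter_upwards [eventually_ge_atTop (1:ℝ)] with x hx1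
      have hx0 : (0:ℝ) ≤ x := by linarith
      have h1 : (1:ℝ) ≤ Real.sqrt x := by
        rw [show (1:ℝ) = Real.sqrt 1 by simp]; exact Real.sqrt_le_sqrt hx1
      rw [Real.norm_eq_abs, Real.norm_eq_abs, ← Real.sqrt_eq_rpow,
        abs_of_nonneg (by positivity), abs_of_nonneg (Real.sqrt_nonneg x)]
      linarith
    have hmul := hsqrt.mul_isLittleO (isLittleO_log_rpow_atTop (by norm_num : (0:ℝ) < 1/2))
    have hmul' : (fun x : ℝ => (Real.sqrt x + 1) * Real.log x) =o[atTop] (id : ℝ → ℝ) := by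
      refine hmul.trans_isBigO (Asymptotics.IsBigO.of_bound 1 ?_)
      filter_upwards [eventually_ge_atTop (1:ℝ)] with x hx1
      have hx0 : (0:ℝ) < x := by linarith
      rw [Real.norm_eq_abs, Real.norm_eq_abs, ← Real.rpow_add hx0]
      norm_num
    have h := hmul'.def (c := 1/16) (by norm_num)
    filter_upwards [h, eventually_ge_atTop (16:ℝ)] with x hx hx16
    have hx1 : (1:ℝ) ≤ x := by linarith
    have hlog0 : 0 ≤ Real.log x := Real.log_nonneg hx1
    rw [Real.norm_eq_abs, Real.norm_eq_abs, id,
      abs_of_nonneg (by positivity : (0:ℝ) ≤ (Real.sqrt x + 1) * Real.log x),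
      abs_of_nonneg (by linarith : (0:ℝ) ≤ x)] at hx
    linarith
  -- F_cheb : at m = ⌊x/4⌋₊
  have hfl : Tendsto (fun x : ℝ => ⌊x / 4⌋₊) atTop atTop :=
    tendsto_nat_floor_atTop.comp (tendsto_id.atTop_div_const (by norm_num))
  have hF5 := hfl.eventually cheb
  have hlog1 : ∀ᶠ x : ℝ in atTop, 1 ≤ Real.log x :=
    Real.tendsto_log_atTop.eventually_ge_atTop 1
  filter_upwards [hF3, hF4, hF6, hF5, hlog1, eventually_ge_atTop (20:ℝ)]
    with x h3 h4 h6 h5 hlx hx20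
  set L : ℝ := Real.log x ^ ((1:ℝ)/α) with hL
  set M : ℝ := c ^ k * L with hM
  have hx0 : (0:ℝ) < x := by linarith
  have hlogpos : (0:ℝ) < Real.log x := by linarith
  have hLpos : 0 < L := Real.rpow_pos_of_pos hlogpos _
  have hMleL : M ≤ L := by
    rw [hM]
    nlinarith [pow_le_one₀ hc0.le hc1.le (n := k), pow_pos hc0 k]
  -- the finsets
  set s : ℕ := ⌊Real.sqrt x⌋₊ with hs
  set m : ℕ := ⌊x / 4⌋₊ with hm
  set t : ℕ := 2 * m with ht
  set P : Finset ℕ := (Finset.Ioc s t).filter Nat.Prime with hP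
  have hfinB : {n : ℕ | n ∈ B ∧ 1 ≤ n ∧ (n : ℝ) ≤ M}.Finite := by
    apply Set.Finite.subset (Set.finite_Icc 1 ⌊M⌋₊)
    rintro n ⟨-, h1, h2⟩
    exact Set.mem_Icc.mpr ⟨h1, Nat.le_floor h2⟩
  set Bf : Finset ℕ := hfinB.toFinset with hBf
  have hBfcard : Bf.card = cnt B M := by
    rw [cnt, hBf]
    exact (Set.ncard_eq_toFinset_card _ hfinB).symm
  -- bounds used several times
  have hmx : (m : ℝ) ≤ x / 4 := Nat.floor_le (by linarith)
  have hmlb : x / 4 - 1 < (m : ℝ) := Nat.sub_one_lt_floor _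
  have hsx : (s : ℝ) ≤ Real.sqrt x := Nat.floor_le (Real.sqrt_nonneg x)
  have hsqx : Real.sqrt x < (s : ℝ) + 1 := Nat.lt_floor_add_one _
  -- apply core
  have hcore : P.card * Bf.card ≤ ∑ n ∈ Finset.Icc 1 ⌊x⌋₊, repTrunc B α n := by
    apply core
    · intro p hp; exact (Finset.mem_filter.mp hp).2
    · intro b hb; exact ((Set.Finite.mem_toFinset _).mp hb).1
    · intro p hp b hb
      obtain ⟨hps, hpt⟩ := Finset.mem_Ioc.mp (Finset.mem_filter.mp hp).1
      have hbM : (b : ℝ) ≤ M := ((Set.Finite.mem_toFinset _).mp hb).2.2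
      have hpx : Real.sqrt x < (p : ℝ) := by
        calc Real.sqrt x < (s : ℝ) + 1 := hsqx
          _ ≤ (p : ℝ) := by exact_mod_cast Nat.succ_le_of_lt hps
      have hsqpos : 0 < Real.sqrt x := Real.sqrt_pos.mpr hx0
      have hlogn : Real.log x / 2 ≤ Real.log ((p + b : ℕ) : ℝ) := by
        rw [← Real.log_sqrt hx0.le]
        apply Real.log_le_log hsqpos
        push_cast
        have : (0:ℝ) ≤ (b:ℕ) := Nat.cast_nonneg b
        linarith
      have hbig : M < (Real.log ((p + b : ℕ) : ℝ)) ^ ((1:ℝ)/α) := by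
        have h1 : M < ((1:ℝ)/2) ^ ((1:ℝ)/α) * L := by
          rw [hM]; exact mul_lt_mul_of_pos_right hk hLpos
        have h2 : ((1:ℝ)/2) ^ ((1:ℝ)/α) * L = (Real.log x / 2) ^ ((1:ℝ)/α) := by
          rw [hL, ← Real.mul_rpow (by norm_num) hlogpos.le]
          ring_nf
        have h3 : (Real.log x / 2) ^ ((1:ℝ)/α) ≤
            (Real.log ((p + b : ℕ) : ℝ)) ^ ((1:ℝ)/α) :=
          Real.rpow_le_rpow (by linarith) hlogn (by positivity)
        linarith
      exact lt_of_le_of_lt hbM hbig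
    · intro p hp b hb
      obtain ⟨hps, hpt⟩ := Finset.mem_Ioc.mp (Finset.mem_filter.mp hp).1
      have hbM : (b : ℝ) ≤ M := ((Set.Finite.mem_toFinset _).mp hb).2.2
      apply Nat.le_floor
      have hpr : (p : ℝ) ≤ x / 2 := by
        calc (p : ℝ) ≤ (t : ℝ) := by exact_mod_cast hpt
          _ = 2 * (m : ℝ) := by push_cast [ht]; ring
          _ ≤ x / 2 := by linarith
      have hbr : (b : ℝ) ≤ x / 2 := le_trans hbM (le_trans hMleL h4)
      push_cast
      linarith
  -- prime count lower bound
  have hm4 : (4:ℕ) ≤ m := by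
    apply Nat.le_floor
    push_cast
    linarith
  have hm4R : (4:ℝ) ≤ (m : ℝ) := by exact_mod_cast hm4
  push_cast at h5
  have hlog2m : Real.log (2 * (m : ℝ)) ≤ Real.log x := by
    apply Real.log_le_log (by linarith)
    linarith
  have hπ0 : (0:ℝ) ≤ (t.primeCounting : ℝ) := Nat.cast_nonneg _
  have hπlx : (m : ℝ) ≤ (t.primeCounting : ℝ) * Real.log x :=
    h5.trans (mul_le_mul_of_nonneg_left hlog2m hπ0)
  have hpiR : ((t.primeCounting : ℝ)) ≤ (P.card : ℝ) + (s : ℝ) + 1 := by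
    have h := pi_Ioc s t
    rw [hP]
    exact_mod_cast h
  have hPcard : x / 8 ≤ (P.card : ℝ) * Real.log x := by
    have hmul1 : (t.primeCounting : ℝ) * Real.log x ≤
        ((P.card : ℝ) + (s : ℝ) + 1) * Real.log x :=
      mul_le_mul_of_nonneg_right hpiR hlogpos.le
    have hmul2 : ((s : ℝ) + 1) * Real.log x ≤ (Real.sqrt x + 1) * Real.log x :=
      mul_le_mul_of_nonneg_right (by linarith) hlogpos.le
    nlinarith
  -- final assembly
  have hR : (P.card : ℝ) * (Bf.card : ℝ) ≤ ∑ n ∈ Finset.Icc 1 ⌊x⌋₊, (repTrunc B α n : ℝ) := by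
    exact_mod_cast hcore
  have hBfge : κ ^ k * (cnt B L : ℝ) ≤ (Bf.card : ℝ) := by
    rw [hBfcard]
    exact_mod_cast h3
  have h1' : x / (8 * Real.log x) ≤ (P.card : ℝ) := by
    rw [div_le_iff₀ (by positivity)]
    nlinarith
  calc κ ^ k / 8 * (x / Real.log x) * (cnt B L : ℝ)
      = (x / (8 * Real.log x)) * (κ ^ k * (cnt B L : ℝ)) := by
        ring
    _ ≤ (P.card : ℝ) * (Bf.card : ℝ) := by
        apply mul_le_mul h1' hBfge (by positivity) (Nat.cast_nonneg _)
    _ ≤ _ := hR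

theorem stmt_3 (α : ℝ) (hα : 0 < α) (B : Set ℕ) (hBpos : ∀ n ∈ B, 0 < n)
    (hcc : CCondition B) :
    ∃ C : ℝ, 0 < C ∧ ∀ᶠ x : ℝ in atTop,
      C * (x / Real.log x) * (cnt B ((Real.log x) ^ ((1 : ℝ) / α)) : ℝ) ≤
        ∑ n ∈ Finset.Icc 1 ⌊x⌋₊, (repTrunc B α n : ℝ) := by
  exact main α hα B hBpos hcc
end

section
/- There exists an absolute constant C > 0 such that for every real y ≥ 16 and every finite set T of positive integers contained in [1,y], one has ∑_{a,b ∈ T, a < b} ∏_{p prime, p ∣ (b-a)} (1 + 1/p) ≤ C·|T|^2·log log y. -/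
open Filter Real

open Finset

private lemma theta_le (N : ℕ) :
    ∑ p ∈ (range (N+1)).filter Nat.Prime, Real.log p ≤ N * Real.log 4 := by
  have h4 := primorial_le_4_pow N
  have hpos : ∀ p ∈ (range (N+1)).filter Nat.Prime, (p:ℝ) ≠ 0 := by
    intro p hp
    exact_mod_cast (mem_filter.mp hp).2.pos.ne'
  have : Real.log (primorial N) = ∑ p ∈ (range (N+1)).filter Nat.Prime, Real.log p := by
    rw [primorial, ← Real.log_prod hpos]
    norm_num
  rw [← this]
  calc Real.log (primorial N) ≤ Real.log ((4:ℝ)^N) := by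
        apply Real.log_le_log (by exact_mod_cast primorial_pos N)
        exact_mod_cast h4
    _ = N * Real.log 4 := by rw [Real.log_pow]

private lemma radical_le {n : ℕ} (hn : 1 ≤ n) :
    ∑ p ∈ n.primeFactors, Real.log p ≤ Real.log n := by
  have hpos : ∀ p ∈ n.primeFactors, (p:ℝ) ≠ 0 := by
    intro p hp
    exact_mod_cast (Nat.prime_of_mem_primeFactors hp).pos.ne'
  rw [← Real.log_prod hpos]
  apply Real.log_le_log
  · exact Finset.prod_pos (fun p hp => by exact_mod_cast (Nat.prime_of_mem_primeFactors hp).pos)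
  · rw [← Nat.cast_prod]
    exact_mod_cast Nat.le_of_dvd hn (Nat.prod_primeFactors_dvd n)

private lemma swap_sum (N : ℕ) :
    ∑ p ∈ (range (N+1)).filter Nat.Prime, Real.log p * (N / p : ℕ) =
      ∑ n ∈ Ioc 0 N, ∑ p ∈ n.primeFactors, Real.log p := by
  have h1 : ∀ p ∈ (range (N+1)).filter Nat.Prime,
      Real.log p * (N / p : ℕ) = ∑ n ∈ Ioc 0 N, if p ∣ n then Real.log p else 0 := by
    intro p hp
    rw [← Finset.sum_filter, Finset.sum_const, Nat.Ioc_filter_dvd_card_eq_div,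
      nsmul_eq_mul, mul_comm]
  rw [Finset.sum_congr rfl h1]
  rw [Finset.sum_comm]
  refine Finset.sum_congr rfl (fun n hn => ?_)
  rw [Finset.mem_Ioc] at hn
  rw [← Finset.sum_filter]
  refine Finset.sum_congr ?_ (fun _ _ => rfl)
  ext p
  simp only [Finset.mem_filter, Finset.mem_range, Nat.mem_primeFactors]
  constructor
  · rintro ⟨⟨_, hpp⟩, hdvd⟩
    exact ⟨hpp, hdvd, by omega⟩
  · rintro ⟨hpp, hdvd, _⟩
    have := Nat.le_of_dvd (by omega) hdvd
    exact ⟨⟨by omega, hpp⟩, hdvd⟩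

private lemma mertens1 {N : ℕ} (hN : 1 ≤ N) :
    ∑ p ∈ (range (N+1)).filter Nat.Prime, Real.log p / p ≤ Real.log N + Real.log 4 := by
  have hNpos : (0:ℝ) < N := by exact_mod_cast hN
  have key : ∑ p ∈ (range (N+1)).filter Nat.Prime, Real.log p * (N / p : ℕ) ≤ N * Real.log N := by
    rw [swap_sum]
    calc ∑ n ∈ Ioc 0 N, ∑ p ∈ n.primeFactors, Real.log p
        ≤ ∑ n ∈ Ioc 0 N, Real.log n := by
          refine Finset.sum_le_sum (fun n hn => ?_)
          exact radical_le (Finset.mem_Ioc.mp hn).1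
      _ ≤ ∑ _n ∈ Ioc 0 N, Real.log N := by
          refine Finset.sum_le_sum (fun n hn => ?_)
          have := (Finset.mem_Ioc.mp hn)
          apply Real.log_le_log (by exact_mod_cast this.1)
          exact_mod_cast this.2
      _ = N * Real.log N := by rw [Finset.sum_const, Nat.card_Ioc, nsmul_eq_mul]; norm_num
  have step : ∀ p ∈ (range (N+1)).filter Nat.Prime,
      Real.log p / p ≤ (Real.log p * (N / p : ℕ)) / N + Real.log p / N := by
    intro p hp
    have hpp := (mem_filter.mp hp).2
    have hppos : (0:ℝ) < p := by exact_mod_cast hpp.pos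
    have hlogp : 0 ≤ Real.log p := Real.log_nonneg (by exact_mod_cast hpp.one_lt.le)
    have hfloor : (N:ℝ) / p ≤ ((N / p : ℕ) : ℝ) + 1 := by
      have hd := Nat.div_add_mod N p
      have hm := Nat.mod_lt N hpp.pos
      have hq : (N / p + 1) * p = p * (N / p) + p := by ring
      have : N ≤ (N / p + 1) * p := by omega
      rw [div_le_iff₀ hppos]
      calc (N:ℝ) ≤ ((N / p + 1) * p : ℕ) := by exact_mod_cast this
        _ = (((N/p:ℕ):ℝ) + 1) * p := by push_cast; ring
    calc Real.log p / p = Real.log p * ((N:ℝ)/p) / N := by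
          field_simp
        _ ≤ Real.log p * (((N/p:ℕ):ℝ) + 1) / N := by
          gcongr
        _ = (Real.log p * (N / p : ℕ)) / N + Real.log p / N := by ring
  calc ∑ p ∈ (range (N+1)).filter Nat.Prime, Real.log p / p
      ≤ ∑ p ∈ (range (N+1)).filter Nat.Prime, ((Real.log p * (N / p : ℕ)) / N + Real.log p / N) :=
        Finset.sum_le_sum step
    _ = (∑ p ∈ (range (N+1)).filter Nat.Prime, Real.log p * (N / p : ℕ)) / N
        + (∑ p ∈ (range (N+1)).filter Nat.Prime, Real.log p) / N := by
        rw [Finset.sum_add_distrib, ← Finset.sum_div, ← Finset.sum_div]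
    _ ≤ (N * Real.log N) / N + (N * Real.log 4) / N := by
        gcongr
        exact theta_le N
    _ = Real.log N + Real.log 4 := by field_simp

private lemma prime_split (f : ℕ → ℝ) (N : ℕ) :
    ∑ p ∈ (range (N+2)).filter Nat.Prime, f p =
      (if Nat.Prime (N+1) then f (N+1) else 0) + ∑ p ∈ (range (N+1)).filter Nat.Prime, f p := by
  rw [show N+2 = (N+1)+1 from rfl, Finset.range_add_one, Finset.filter_insert]
  split_ifs with h
  · rw [Finset.sum_insert (by simp)]
  · simp

private lemma mertens2 {N : ℕ} (hN : 2 ≤ N) :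
    ∑ p ∈ (range (N+1)).filter Nat.Prime, 1/(p:ℝ) ≤
      (∑ p ∈ (range (N+1)).filter Nat.Prime, Real.log p / p) / Real.log N
      + (Real.log (Real.log N) - Real.log (Real.log 2))
      + Real.log 4 * (1/Real.log 2 - 1/Real.log N) := by
  induction N, hN using Nat.le_induction with
  | base =>
    have h2 : (range 3).filter Nat.Prime = {2} := by decide
    rw [h2]
    have hl2 : Real.log 2 ≠ 0 := (Real.log_pos (by norm_num)).ne'
    push_cast
    simp only [Finset.sum_singleton]
    field_simp
    simp
  | succ N hN ih =>
    set A := ∑ p ∈ (range (N+1)).filter Nat.Prime, Real.log p / p with hA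
    set S := ∑ p ∈ (range (N+1)).filter Nat.Prime, 1/(p:ℝ) with hS
    set L := Real.log N with hL
    set L' := Real.log (N+1:ℕ) with hL'
    set c := Real.log 4 with hc
    have hN1 : (1:ℝ) < N := by exact_mod_cast hN
    have hLpos : 0 < L := Real.log_pos hN1
    have hL'pos : 0 < L' := Real.log_pos (by push_cast; linarith)
    have hLL' : L ≤ L' := Real.log_le_log (by linarith) (by push_cast; linarith)
    have hΔ : 0 ≤ 1/L - 1/L' := by
      have := one_div_le_one_div_of_le hLpos hLL'
      linarith
    have hA0 : 0 ≤ A := Finset.sum_nonneg (fun p hp => by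
      have hpp := (mem_filter.mp hp).2
      have h1 : (1:ℝ) ≤ p := by exact_mod_cast hpp.one_lt.le
      exact div_nonneg (Real.log_nonneg h1) (by linarith))
    have hALc : A ≤ L + c := mertens1 (by omega)
    have h1 : A * (1/L - 1/L') ≤ (L + c) * (1/L - 1/L') :=
      mul_le_mul_of_nonneg_right hALc hΔ
    have h2 : (L + c) * (1/L - 1/L') = (1 - L/L') + (c/L - c/L') := by
      field_simp
    have hkey : 1 - L/L' ≤ Real.log L' - Real.log L := by
      have hx : 0 < L / L' := div_pos hLpos hL'pos
      have := Real.log_le_sub_one_of_pos hx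
      rw [Real.log_div hLpos.ne' hL'pos.ne'] at this
      linarith
    have e1 : A/L' + A * (1/L - 1/L') = A/L := by
      field_simp
      ring
    have e4 : c * (1/L - 1/L') = c/L - c/L' := by ring
    have e5 : c * (1/Real.log 2 - 1/L') = c/Real.log 2 - c/L' := by ring
    have e6 : c * (1/Real.log 2 - 1/L) = c/Real.log 2 - c/L := by ring
    have hsplit1 := prime_split (fun p => 1/(p:ℝ)) N
    have hsplit2 := prime_split (fun p => Real.log p / p) N
    push_cast at hsplit1 hsplit2 ih ⊢
    rw [show N+1+1 = N+2 from rfl, hsplit1, hsplit2]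
    split_ifs with hp
    · have hδ : (Real.log (N+1) / (N+1)) / L' = 1/((N:ℝ)+1) := by
        rw [hL']
        push_cast
        have hlog : (0:ℝ) < Real.log ((N:ℝ)+1) := Real.log_pos (by linarith)
        rw [div_div, mul_comm, ← div_div, div_self hlog.ne']
      have e3 : (Real.log ((N:ℝ)+1) / ((N:ℝ)+1) + A) / L' =
          (Real.log ((N:ℝ)+1) / ((N:ℝ)+1)) / L' + A / L' := add_div _ _ _
      rw [e3, hδ]
      linarith [ih, h1, h2, hkey, e1, e4, e5, e6]
    · simp only [zero_add]
      linarith [ih, h1, h2, hkey, e1, e4, e5, e6]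

private lemma mertens2_final :
    ∃ K : ℝ, 0 ≤ K ∧ ∀ N : ℕ, 2 ≤ N →
      ∑ p ∈ (range (N+1)).filter Nat.Prime, 1/(p:ℝ) ≤ Real.log (Real.log N) + K := by
  have hl2 : 0 < Real.log 2 := Real.log_pos (by norm_num)
  have hl4 : 0 < Real.log 4 := Real.log_pos (by norm_num)
  refine ⟨1 + 2 * (Real.log 4 / Real.log 2) - Real.log (Real.log 2), ?_, ?_⟩
  · have h1 : Real.log 2 < 1 := by
      have := Real.log_lt_sub_one_of_pos (by norm_num : (0:ℝ) < 2) (by norm_num)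
      linarith
    have h2 : Real.log (Real.log 2) < 0 := Real.log_neg hl2 h1
    have h3 : 0 ≤ Real.log 4 / Real.log 2 := by positivity
    linarith
  · intro N hN
    have h := mertens2 hN
    have hN1 : (1:ℝ) < N := by exact_mod_cast hN
    have hL : 0 < Real.log N := Real.log_pos hN1
    have hlog2N : Real.log 2 ≤ Real.log N :=
      Real.log_le_log (by norm_num) (by exact_mod_cast hN)
    have hA : ∑ p ∈ (range (N+1)).filter Nat.Prime, Real.log p / p ≤ Real.log N + Real.log 4 :=
      mertens1 (by omega)
    have hA0 : 0 ≤ ∑ p ∈ (range (N+1)).filter Nat.Prime, Real.log p / p :=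
      Finset.sum_nonneg (fun p hp => by
        have hpp := (mem_filter.mp hp).2
        have h1 : (1:ℝ) ≤ p := by exact_mod_cast hpp.one_lt.le
        exact div_nonneg (Real.log_nonneg h1) (by linarith))
    have hdiv : (∑ p ∈ (range (N+1)).filter Nat.Prime, Real.log p / p) / Real.log N
        ≤ 1 + Real.log 4 / Real.log 2 := by
      calc (∑ p ∈ (range (N+1)).filter Nat.Prime, Real.log p / p) / Real.log N
          ≤ (Real.log N + Real.log 4) / Real.log N := by gcongr
        _ = 1 + Real.log 4 / Real.log N := by field_simp
        _ ≤ 1 + Real.log 4 / Real.log 2 := by gcongr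
    have hc : Real.log 4 * (1/Real.log 2 - 1/Real.log N) ≤ Real.log 4 / Real.log 2 := by
      have h1 : 0 < 1/Real.log N := by positivity
      have h2 : Real.log 4 * (1/Real.log 2 - 1/Real.log N) ≤ Real.log 4 * (1/Real.log 2) :=
        mul_le_mul_of_nonneg_left (by linarith) hl4.le
      calc Real.log 4 * (1/Real.log 2 - 1/Real.log N) ≤ Real.log 4 * (1/Real.log 2) := h2
        _ = Real.log 4 / Real.log 2 := by ring
    linarith

private lemma two_lt_log {y : ℝ} (hy : 16 ≤ y) : 2 < Real.log y := by
  have h1 := Real.exp_one_lt_d9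
  have hexp2 : Real.exp 2 = Real.exp 1 * Real.exp 1 := by
    rw [← Real.exp_add]; norm_num
  have h : Real.exp 2 < 16 := by nlinarith [Real.exp_pos 1]
  exact (Real.lt_log_iff_exp_lt (by linarith : (0:ℝ) < y)).mpr (lt_of_lt_of_le h hy)

private lemma perterm {K : ℝ} (hK : 0 ≤ K)
    (hM : ∀ N : ℕ, 2 ≤ N →
      ∑ p ∈ (range (N+1)).filter Nat.Prime, 1/(p:ℝ) ≤ Real.log (Real.log N) + K)
    {y : ℝ} (hy : 16 ≤ y) {n : ℕ} (hn : 1 ≤ n) (hny : (n:ℝ) ≤ y) :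
    ∏ p ∈ n.primeFactors, (1 + 1/(p:ℝ)) ≤ 2 * Real.exp (K + 2) * Real.log (Real.log y) := by
  have h2y : (2:ℝ) < Real.log y := two_lt_log hy
  set z : ℕ := ⌈Real.log y⌉₊ with hzdef
  have hz2 : 2 ≤ z := by
    have : (2:ℕ) < z := Nat.lt_ceil.mpr (by exact_mod_cast h2y)
    omega
  have hzR : (2:ℝ) ≤ (z:ℝ) := by exact_mod_cast hz2
  have hzge : Real.log y ≤ z := Nat.le_ceil _
  have hzle : (z:ℝ) ≤ 2 * Real.log y := by
    have := Nat.ceil_lt_add_one (by linarith : (0:ℝ) ≤ Real.log y)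
    calc (z:ℝ) ≤ Real.log y + 1 := by exact_mod_cast this.le
      _ ≤ 2 * Real.log y := by linarith
  have hlogz : 0 < Real.log z := Real.log_pos (by linarith)
  have hlog2 : 0 < Real.log 2 := Real.log_pos (by norm_num)
  have hlog2z : Real.log 2 ≤ Real.log z := Real.log_le_log (by norm_num) hzR
  -- small primes
  have hsmall : ∑ p ∈ n.primeFactors.filter (fun p => p ≤ z), 1/(p:ℝ)
      ≤ Real.log (Real.log z) + K := by
    refine le_trans (Finset.sum_le_sum_of_subset_of_nonneg ?_ ?_) (hM z hz2)
    · intro p hp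
      obtain ⟨hpf, hle⟩ := mem_filter.mp hp
      exact mem_filter.mpr ⟨Finset.mem_range.mpr (by omega), Nat.prime_of_mem_primeFactors hpf⟩
    · intro p _ _
      positivity
  -- big primes
  set B := n.primeFactors.filter (fun p => ¬ p ≤ z) with hB
  have hzpos : (0:ℝ) < z := by linarith
  have hnpos : (0:ℝ) < n := by exact_mod_cast hn
  have hcard : (B.card : ℝ) * Real.log z ≤ Real.log y := by
    have hpow : z ^ B.card ≤ n := by
      have h1 : z ^ B.card ≤ ∏ p ∈ B, p := by
        refine Finset.pow_card_le_prod B _ _ (fun p hp => ?_)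
        have := (mem_filter.mp hp).2
        omega
      have h2 : (∏ p ∈ B, p) ∣ n :=
        dvd_trans (Finset.prod_dvd_prod_of_subset B n.primeFactors _ (Finset.filter_subset _ _))
          (Nat.prod_primeFactors_dvd n)
      exact le_trans h1 (Nat.le_of_dvd hn h2)
    have h3 : Real.log ((z:ℝ) ^ B.card) ≤ Real.log n := by
      apply Real.log_le_log (by positivity)
      calc ((z:ℝ) ^ B.card) = ((z ^ B.card : ℕ) : ℝ) := by push_cast; ring
        _ ≤ n := by exact_mod_cast hpow
    rw [Real.log_pow] at h3
    calc (B.card : ℝ) * Real.log z ≤ Real.log n := by exact_mod_cast h3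
      _ ≤ Real.log y := Real.log_le_log hnpos hny
  have hcard2 : (B.card : ℝ) ≤ Real.log y / Real.log z := (le_div_iff₀ hlogz).mpr hcard
  have hbig : ∑ p ∈ B, 1/(p:ℝ) ≤ 1 / Real.log 2 := by
    have h1 : ∑ p ∈ B, 1/(p:ℝ) ≤ B.card • (1/(z:ℝ)) := by
      refine Finset.sum_le_card_nsmul B _ _ (fun p hp => ?_)
      have hpz := (mem_filter.mp hp).2
      have : (z:ℝ) ≤ p := by exact_mod_cast (by omega : z ≤ p)
      exact one_div_le_one_div_of_le hzpos this
    have h2 : (B.card : ℝ) * (1/(z:ℝ)) ≤ (Real.log y / Real.log z) * (1/(z:ℝ)) :=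
      mul_le_mul_of_nonneg_right hcard2 (by positivity)
    have h3 : (Real.log y / Real.log z) * (1/(z:ℝ)) = (Real.log y / z) * (1/Real.log z) := by
      ring
    have h4 : Real.log y / (z:ℝ) ≤ 1 := (div_le_one hzpos).mpr hzge
    have h5 : (Real.log y / z) * (1/Real.log z) ≤ 1 * (1/Real.log z) :=
      mul_le_mul_of_nonneg_right h4 (by positivity)
    have h6 : (1:ℝ)/Real.log z ≤ 1/Real.log 2 := one_div_le_one_div_of_le hlog2 hlog2z
    rw [nsmul_eq_mul] at h1
    linarith
  have hsum : ∑ p ∈ n.primeFactors, 1/(p:ℝ) ≤ Real.log (Real.log z) + K + 1/Real.log 2 := by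
    rw [← Finset.sum_filter_add_sum_filter_not n.primeFactors (fun p => p ≤ z)]
    linarith
  have hlog2half : (1:ℝ)/2 ≤ Real.log 2 := by
    have := Real.log_two_gt_d9
    linarith
  have h1d2 : (1:ℝ)/Real.log 2 ≤ 2 := by
    rw [div_le_iff₀ hlog2]
    linarith
  calc ∏ p ∈ n.primeFactors, (1 + 1/(p:ℝ))
      ≤ ∏ p ∈ n.primeFactors, Real.exp (1/(p:ℝ)) := by
        refine Finset.prod_le_prod (fun p hp => by positivity) (fun p hp => ?_)
        have := Real.add_one_le_exp (1/(p:ℝ))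
        linarith
    _ = Real.exp (∑ p ∈ n.primeFactors, 1/(p:ℝ)) := (Real.exp_sum _ _).symm
    _ ≤ Real.exp (Real.log (Real.log z) + K + 2) := by
        apply Real.exp_le_exp.mpr
        linarith
    _ = Real.exp (K + 2) * Real.log z := by
        rw [show Real.log (Real.log z) + K + 2 = (K + 2) + Real.log (Real.log z) by ring,
          Real.exp_add, Real.exp_log hlogz]
    _ ≤ Real.exp (K + 2) * (2 * Real.log (Real.log y)) := by
        have hlz : Real.log z ≤ Real.log 2 + Real.log (Real.log y) := by
          calc Real.log z ≤ Real.log (2 * Real.log y) :=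
                Real.log_le_log hzpos hzle
            _ = Real.log 2 + Real.log (Real.log y) :=
                Real.log_mul (by norm_num) (by linarith)
        have hll : Real.log 2 ≤ Real.log (Real.log y) :=
          Real.log_le_log (by norm_num) (by linarith)
        have := Real.exp_pos (K + 2)
        nlinarith
    _ = 2 * Real.exp (K + 2) * Real.log (Real.log y) := by ring

theorem stmt_5 :
    ∃ C : ℝ, 0 < C ∧ ∀ y : ℝ, 16 ≤ y → ∀ T : Finset ℕ,
      (∀ t ∈ T, 1 ≤ t ∧ (t : ℝ) ≤ y) →
      ∑ a ∈ T, ∑ b ∈ T.filter (fun b => a < b),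
          ∏ p ∈ (b - a).primeFactors, (1 + 1 / (p : ℝ)) ≤
        C * (T.card : ℝ) ^ 2 * Real.log (Real.log y) := by
  obtain ⟨K, hK0, hM⟩ := mertens2_final
  refine ⟨2 * Real.exp (K + 2), by positivity, ?_⟩
  intro y hy T hT
  have h2y : (2:ℝ) < Real.log y := two_lt_log hy
  have hL0 : 0 ≤ Real.log (Real.log y) := Real.log_nonneg (by linarith)
  have hC0 : (0:ℝ) ≤ 2 * Real.exp (K + 2) * Real.log (Real.log y) := by
    have := Real.exp_pos (K + 2)
    nlinarith
  calc ∑ a ∈ T, ∑ b ∈ T.filter (fun b => a < b),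
          ∏ p ∈ (b - a).primeFactors, (1 + 1 / (p : ℝ))
      ≤ ∑ a ∈ T, ∑ _b ∈ T.filter (fun b => a < b),
          (2 * Real.exp (K + 2) * Real.log (Real.log y)) := by
        refine Finset.sum_le_sum (fun a ha => Finset.sum_le_sum (fun b hb => ?_))
        obtain ⟨hbT, hab⟩ := Finset.mem_filter.mp hb
        have h1 : 1 ≤ b - a := by omega
        have h2 : ((b - a : ℕ) : ℝ) ≤ y := by
          calc ((b - a : ℕ) : ℝ) ≤ (b : ℝ) := by exact_mod_cast Nat.sub_le b a
            _ ≤ y := (hT b hbT).2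
        exact perterm hK0 hM hy h1 h2
    _ ≤ ∑ _a ∈ T, (T.card : ℝ) * (2 * Real.exp (K + 2) * Real.log (Real.log y)) := by
        refine Finset.sum_le_sum (fun a ha => ?_)
        rw [Finset.sum_const, nsmul_eq_mul]
        refine mul_le_mul_of_nonneg_right ?_ hC0
        exact_mod_cast Finset.card_le_card (Finset.filter_subset _ _)
    _ = (T.card : ℝ) ^ 2 * (2 * Real.exp (K + 2) * Real.log (Real.log y)) := by
        rw [Finset.sum_const, nsmul_eq_mul]; ring
    _ = 2 * Real.exp (K + 2) * (T.card : ℝ) ^ 2 * Real.log (Real.log y) := by ring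
end

section
/- Fix an integer m ≥ 2. With B_j = {n ∈ ℕ : d_j ∣ n and exp(j^m) ≤ n < exp((j+1)^m)}, there exists a positive integer j₀ such that |B_j| < |B_{j+1}| for all j ≥ j₀, i.e., the sequence of cardinalities |B_{j₀}| < |B_{j₀+1}| < |B_{j₀+2}| < ⋯ is strictly increasing from j₀ onward. -/
open Filter Real

/-- `dPrimorial j = p_1 p_2 ⋯ p_j`, the product of the first `j` primes
(`Nat.nth Nat.Prime i` is the `(i+1)`-st prime). -/
noncomputable def dPrimorial (j : ℕ) : ℕ := ∏ i ∈ Finset.range j, Nat.nth Nat.Prime i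

/-- `Bset m j = {n ∈ ℕ : d_j ∣ n and exp(j^m) ≤ n < exp((j+1)^m)}`. -/
def Bset (m j : ℕ) : Set ℕ :=
  {n : ℕ | dPrimorial j ∣ n ∧
    Real.exp ((j : ℝ) ^ m) ≤ (n : ℝ) ∧ (n : ℝ) < Real.exp (((j : ℝ) + 1) ^ m)}

/-- Bound on the `(i+1)`-st prime via Bertrand. -/
lemma nth_prime_le_two_pow (i : ℕ) : Nat.nth Nat.Prime i ≤ 2 ^ (i + 1) := by
  induction i with
  | zero => simp
  | succ i ih =>
    obtain ⟨p, hp, hlt, hle⟩ :=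
      Nat.exists_prime_lt_and_le_two_mul (Nat.nth Nat.Prime i)
        (Nat.prime_nth_prime i).ne_zero
    have h1 : Nat.nth Nat.Prime (i + 1) ≤ p := by
      rw [Nat.nth_eq_sInf]
      refine Nat.sInf_le ⟨hp, fun k hk => ?_⟩
      exact lt_of_le_of_lt
        (Nat.nth_monotone Nat.infinite_setOf_prime (Nat.lt_succ_iff.mp hk)) hlt
    calc Nat.nth Nat.Prime (i + 1) ≤ 2 * Nat.nth Nat.Prime i := h1.trans hle
      _ ≤ 2 * 2 ^ (i + 1) := by omega
      _ = 2 ^ (i + 1 + 1) := by ring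

lemma dPrimorial_pos (j : ℕ) : 0 < dPrimorial j :=
  Finset.prod_pos fun i _ => (Nat.prime_nth_prime i).pos

lemma dPrimorial_le_two_pow (j : ℕ) : dPrimorial j ≤ 2 ^ (j * j) := by
  calc dPrimorial j ≤ ∏ _i ∈ Finset.range j, 2 ^ j := by
        refine Finset.prod_le_prod' fun i hi => ?_
        exact (nth_prime_le_two_pow i).trans
          (Nat.pow_le_pow_right (by norm_num) (by simpa using Finset.mem_range.mp hi))
    _ = 2 ^ (j * j) := by rw [Finset.prod_const, Finset.card_range, ← pow_mul]

/-- the ceiling of the interval endpoints -/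
noncomputable def Aend (m k : ℕ) : ℕ := ⌈Real.exp ((k : ℝ) ^ m)⌉₊

lemma one_le_Aend (m k : ℕ) : 1 ≤ Aend m k :=
  Nat.one_le_ceil_iff.mpr (Real.exp_pos _)

lemma Aend_mono (m : ℕ) (k : ℕ) : Aend m k ≤ Aend m (k + 1) := by
  exact Nat.ceil_le_ceil (Real.exp_le_exp.mpr
    (pow_le_pow_left₀ (by positivity) (by push_cast; linarith) m))

lemma Bset_ncard (m j : ℕ) :
    (Bset m j).ncard =
      (Aend m (j + 1) - 1) / dPrimorial j - (Aend m j - 1) / dPrimorial j := by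
  classical
  have h1 : 1 ≤ Aend m j := one_le_Aend m j
  have hmono : Aend m j ≤ Aend m (j + 1) := Aend_mono m j
  have hset : Bset m j =
      ↑({x ∈ Finset.Ioc 0 (Aend m (j + 1) - 1) | dPrimorial j ∣ x} \
        {x ∈ Finset.Ioc 0 (Aend m j - 1) | dPrimorial j ∣ x}) := by
    have hA : Aend m (j + 1) = ⌈Real.exp (((j : ℝ) + 1) ^ m)⌉₊ := by
      have : (((j + 1 : ℕ) : ℝ)) ^ m = ((j : ℝ) + 1) ^ m := by push_cast; ring
      simp only [Aend, this]
    ext n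
    have hle : Real.exp ((j : ℝ) ^ m) ≤ (n : ℝ) ↔ Aend m j ≤ n := (Nat.ceil_le).symm
    have hlt' : (n : ℝ) < Real.exp (((j : ℝ) + 1) ^ m) ↔ n < Aend m (j + 1) := by
      rw [hA, ← Nat.lt_ceil]
    simp only [Bset, Set.mem_setOf_eq, Finset.coe_sdiff, Set.mem_diff, Finset.mem_coe,
      Finset.mem_filter, Finset.mem_Ioc]
    rw [hle, hlt']
    constructor
    · rintro ⟨hd, ha, hb⟩
      exact ⟨⟨by omega, hd⟩, fun ⟨⟨_, h'⟩, _⟩ => by omega⟩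
    · rintro ⟨⟨⟨hn0, hnb⟩, hd⟩, hnot⟩
      refine ⟨hd, ?_, by omega⟩
      by_contra hcon
      exact hnot ⟨⟨by omega, by omega⟩, hd⟩
  rw [hset, Set.ncard_coe_finset,
    Finset.card_sdiff_of_subset
      (Finset.filter_subset_filter _ (Finset.Ioc_subset_Ioc le_rfl (by omega))),
    Nat.Ioc_filter_dvd_card_eq_div, Nat.Ioc_filter_dvd_card_eq_div]

theorem stmt_7 (m : ℕ) (hm : 2 ≤ m) :
    ∃ j₀ : ℕ, 0 < j₀ ∧ ∀ j : ℕ, j₀ ≤ j →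
      (Bset m j).ncard < (Bset m (j + 1)).ncard := by
  refine ⟨1, one_pos, fun j _ => ?_⟩
  obtain ⟨k, rfl⟩ : ∃ k, m = 2 + k := ⟨m - 2, by omega⟩
  set m := 2 + k with hmdef
  set d := dPrimorial j with hd
  set p := Nat.nth Nat.Prime j with hpd
  set D := dPrimorial (j + 1) with hD
  have hDd : D = d * p := Finset.prod_range_succ _ _
  have hdpos : 0 < d := dPrimorial_pos j
  have hDpos : 0 < D := dPrimorial_pos (j + 1)
  set a := Aend m j with ha
  set b := Aend m (j + 1) with hb
  set c := Aend m (j + 2) with hc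
  have hb1 : 1 ≤ b := one_le_Aend m (j + 1)
  have hc1 : 1 ≤ c := one_le_Aend m (j + 2)
  -- real abbreviations
  set E1 : ℝ := Real.exp (((j : ℝ) + 1) ^ m) with hE1def
  set E2 : ℝ := Real.exp (((j : ℝ) + 2) ^ m) with hE2def
  have hE1ge : (1 : ℝ) ≤ E1 := Real.one_le_exp (by positivity)
  -- b - 1 ≤ E1  (as reals)
  have hbE : ((b - 1 : ℕ) : ℝ) ≤ E1 := by
    have : (b : ℝ) < Real.exp (((j + 1 : ℕ) : ℝ) ^ m) + 1 :=
      Nat.ceil_lt_add_one (Real.exp_pos _).le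
    have h2 : Real.exp (((j + 1 : ℕ) : ℝ) ^ m) = E1 := by rw [hE1def]; push_cast; ring_nf
    rw [h2] at this
    rw [Nat.cast_sub hb1]
    push_cast
    linarith
  -- E2 ≤ c
  have hcE : E2 ≤ (c : ℝ) := by
    have h2 : Real.exp (((j + 2 : ℕ) : ℝ) ^ m) = E2 := by rw [hE2def]; push_cast; ring_nf
    have := Nat.le_ceil (Real.exp (((j + 2 : ℕ) : ℝ) ^ m))
    calc E2 = Real.exp (((j + 2 : ℕ) : ℝ) ^ m) := h2.symm
      _ ≤ ((⌈Real.exp (((j + 2 : ℕ) : ℝ) ^ m)⌉₊ : ℕ) : ℝ) := this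
      _ = (c : ℝ) := rfl
  -- D ≤ E1
  have hDE : (D : ℝ) ≤ E1 := by
    have h1 : (D : ℝ) ≤ 2 ^ ((j + 1) * (j + 1)) := by
      exact_mod_cast dPrimorial_le_two_pow (j + 1)
    have h2 : (2 : ℝ) ^ ((j + 1) * (j + 1)) ≤ Real.exp (((j : ℝ) + 1) ^ 2) := by
      have he : (2 : ℝ) ≤ Real.exp 1 := by
        have := Real.add_one_le_exp (1 : ℝ); linarith
      calc (2 : ℝ) ^ ((j + 1) * (j + 1)) ≤ Real.exp 1 ^ ((j + 1) * (j + 1)) :=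
            pow_le_pow_left₀ (by norm_num) he _
        _ = Real.exp (((j + 1) * (j + 1) : ℕ) * 1) := (Real.exp_nat_mul 1 _).symm
        _ = Real.exp (((j : ℝ) + 1) ^ 2) := by push_cast; ring_nf
    have h3 : Real.exp (((j : ℝ) + 1) ^ 2) ≤ E1 := by
      rw [hE1def]
      exact Real.exp_le_exp.mpr (pow_le_pow_right₀ (by linarith [Nat.cast_nonneg (α := ℝ) j]) (by omega))
    linarith
  -- p ≤ 2^(j+2)  (reals)
  have hpE : (p : ℝ) ≤ 2 ^ (j + 2) := by
    exact_mod_cast (nth_prime_le_two_pow j).trans (Nat.pow_le_pow_right (by norm_num) (by omega))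
  -- (p+3) * E1 ≤ E2
  have hkey : ((p : ℝ) + 3) * E1 ≤ E2 := by
    have hdiff : (2 * (j : ℝ) + 3) ≤ ((j : ℝ) + 2) ^ m - ((j : ℝ) + 1) ^ m := by
      have hjn : (0 : ℝ) ≤ (j : ℝ) := Nat.cast_nonneg j
      have h1 : ((j : ℝ) + 1) ^ k ≤ ((j : ℝ) + 2) ^ k :=
        pow_le_pow_left₀ (by linarith) (by linarith) k
      have h2 : (1 : ℝ) ≤ ((j : ℝ) + 1) ^ k := one_le_pow₀ (by linarith)
      have e1 : ((j : ℝ) + 2) ^ m = ((j : ℝ) + 2) ^ 2 * ((j : ℝ) + 2) ^ k := by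
        rw [hmdef, pow_add]
      have e2 : ((j : ℝ) + 1) ^ m = ((j : ℝ) + 1) ^ 2 * ((j : ℝ) + 1) ^ k := by
        rw [hmdef, pow_add]
      rw [e1, e2]
      nlinarith [sq_nonneg ((j : ℝ) + 1), sq_nonneg ((j : ℝ) + 2)]
    have hp3 : (p : ℝ) + 3 ≤ Real.exp (2 * (j : ℝ) + 3) := by
      have h2 : (2 : ℝ) ^ (j + 3) ≤ Real.exp ((j : ℝ) + 3) := by
        have he : (2 : ℝ) ≤ Real.exp 1 := by
          have := Real.add_one_le_exp (1 : ℝ); linarith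
        calc (2 : ℝ) ^ (j + 3) ≤ Real.exp 1 ^ (j + 3) := pow_le_pow_left₀ (by norm_num) he _
          _ = Real.exp (((j + 3 : ℕ) : ℝ) * 1) := (Real.exp_nat_mul 1 _).symm
          _ = Real.exp ((j : ℝ) + 3) := by push_cast; ring_nf
      have h4 : (4 : ℝ) ≤ 2 ^ (j + 2) := by
        calc (4 : ℝ) = 2 ^ 2 := by norm_num
          _ ≤ 2 ^ (j + 2) := pow_le_pow_right₀ (by norm_num) (by omega)
      have h5 : (2 : ℝ) ^ (j + 3) = 2 * 2 ^ (j + 2) := by ring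
      have h6 : Real.exp ((j : ℝ) + 3) ≤ Real.exp (2 * (j : ℝ) + 3) := by
        refine Real.exp_le_exp.mpr ?_
        have : (0 : ℝ) ≤ (j : ℝ) := Nat.cast_nonneg j
        linarith
      nlinarith
    have : (p : ℝ) + 3 ≤ Real.exp (((j : ℝ) + 2) ^ m - ((j : ℝ) + 1) ^ m) :=
      hp3.trans (Real.exp_le_exp.mpr hdiff)
    calc ((p : ℝ) + 3) * E1 ≤ Real.exp (((j : ℝ) + 2) ^ m - ((j : ℝ) + 1) ^ m) * E1 := by
          have : (0 : ℝ) < E1 := Real.exp_pos _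
          nlinarith
      _ = E2 := by rw [hE1def, hE2def, ← Real.exp_add]; ring_nf
  -- main nat inequality : p*(b-1) + (b-1) + D + 1 ≤ c
  have hnat : p * (b - 1) + (b - 1) + D + 1 ≤ c := by
    have hcast : ((p * (b - 1) + (b - 1) + D + 1 : ℕ) : ℝ) ≤ (c : ℝ) := by
      push_cast
      have hp0 : (0 : ℝ) ≤ (p : ℝ) := Nat.cast_nonneg p
      nlinarith [hbE, hDE, hkey, hcE, hE1ge]
    exact_mod_cast hcast
  -- key division inequality
  have key : (b - 1) / d + (b - 1) / D + 1 ≤ (c - 1) / D := by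
    rw [Nat.le_div_iff_mul_le hDpos]
    have h1 : ((b - 1) / d) * d ≤ b - 1 := Nat.div_mul_le_self _ _
    have h2 : ((b - 1) / D) * D ≤ b - 1 := Nat.div_mul_le_self _ _
    calc ((b - 1) / d + (b - 1) / D + 1) * D
        = ((b - 1) / d) * d * p + ((b - 1) / D) * D + D := by rw [hDd]; ring
      _ ≤ (b - 1) * p + (b - 1) + D := by
          have h3 : ((b - 1) / d) * d * p ≤ (b - 1) * p := Nat.mul_le_mul h1 le_rfl
          omega
      _ ≤ c - 1 := by
          have h4 := hnat
          rw [Nat.mul_comm p (b - 1)] at h4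
          omega
  calc (Bset m j).ncard = (b - 1) / d - (a - 1) / d := Bset_ncard m j
    _ ≤ (b - 1) / d := Nat.sub_le _ _
    _ < (c - 1) / D - (b - 1) / D := by omega
    _ = (Bset m (j + 1)).ncard := by
        rw [Bset_ncard m (j + 1)]
end

section
/- Fix an integer m ≥ 2 and let B = ⋃_{j≥1} B_j, where B_j = {n ∈ ℕ : d_j ∣ n and exp(j^m) ≤ n < exp((j+1)^m)}. Then there exists a constant C > 0 such that B(x) ≥ C·x·exp(-(2/m)·(log x)^{1/m}·log log x) for all sufficiently large x. -/
open Filter Real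

-- Chebyshev core
lemma cheb_s8 (n : ℕ) (hn : 1 ≤ n) :
    (2*n).choose n ≤ (2*n) ^ (Nat.count Nat.Prime (2*n+1)) := by
  set N := (2*n).choose n with hN
  have hN0 : N ≠ 0 := Nat.choose_pos (by omega) |>.ne'
  calc N = N.factorization.prod (· ^ ·) := (Nat.factorization_prod_pow_eq_self hN0).symm
    _ = ∏ p ∈ N.primeFactors, p ^ (N.factorization p) := by
        rw [Nat.prod_factorization_eq_prod_primeFactors]
    _ ≤ ∏ p ∈ N.primeFactors, (2*n) := by
        apply Finset.prod_le_prod'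
        intro p hp
        exact Nat.pow_factorization_choose_le (by omega)
    _ = (2*n) ^ N.primeFactors.card := Finset.prod_const _
    _ ≤ (2*n) ^ (Nat.count Nat.Prime (2*n+1)) := by
        apply Nat.pow_le_pow_right (by omega)
        rw [Nat.count_eq_card_filter_range]
        apply Finset.card_le_card
        intro p hp
        simp only [Finset.mem_filter, Finset.mem_range]
        refine ⟨?_, Nat.prime_of_mem_primeFactors hp⟩
        have h1 : p ^ (N.factorization p) ≤ 2*n := Nat.pow_factorization_choose_le (by omega)
        have h2 : 1 ≤ N.factorization p := by
          have := Nat.Prime.factorization_pos_of_dvd (Nat.prime_of_mem_primeFactors hp) hN0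
            (Nat.dvd_of_mem_primeFactors hp)
          omega
        have h3 : p ≤ p ^ (N.factorization p) := Nat.le_self_pow (by omega) p
        omega

lemma log_bound : ∀ L, 4 ≤ L → 2*L+3 ≤ 2^L := by
  intro L hL
  induction L with
  | zero => omega
  | succ k ih =>
    rcases Nat.lt_or_ge k 4 with h | h
    · interval_cases k <;> simp_all <;> omega
    · have := ih (by omega)
      have : 2 ≤ 2^k := Nat.one_lt_two_pow (by omega)
      calc 2*(k+1)+3 = (2*k+3) + 2 := by ring
        _ ≤ 2^k + 2^k := by omega
        _ = 2^(k+1) := by ring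


lemma count_primes_sq (j : ℕ) (hj : 16 ≤ j) : j ≤ Nat.count Nat.Prime (j^2) := by
  by_contra hc
  push_neg at hc
  set n := (j^2 - 1)/2 with hn
  have hj2 : 16*16 ≤ j^2 := by nlinarith
  have h2n : 2*n + 1 ≤ j^2 ∧ j^2 ≤ 2*n + 2 := by omega
  have hcount : Nat.count Nat.Prime (2*n+1) ≤ j - 1 := by
    have := Nat.count_monotone Nat.Prime h2n.1
    omega
  have hcb : 4^n ≤ (2*n+1) * (2*n)^(j-1) := by
    calc 4^n ≤ (2*n+1) * (2*n).choose n :=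
          Nat.four_pow_le_two_mul_add_one_mul_central_binom n
      _ ≤ (2*n+1) * (2*n)^(Nat.count Nat.Prime (2*n+1)) := by
          exact Nat.mul_le_mul_left _ (cheb_s8 n (by omega))
      _ ≤ (2*n+1) * (2*n)^(j-1) :=
          Nat.mul_le_mul_left _ (Nat.pow_le_pow_right (by omega) hcount)
  have hjj : (2*n+1) * (2*n)^(j-1) ≤ j^(2*j) := by
    calc (2*n+1) * (2*n)^(j-1) ≤ j^2 * (j^2)^(j-1) :=
          Nat.mul_le_mul h2n.1 (Nat.pow_le_pow_left (by omega) _)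
      _ = (j^2)^(j-1+1) := by rw [pow_succ]; ring
      _ = j^(2*j) := by rw [← pow_mul]; congr 1; omega
  set L := Nat.log 2 j with hL
  have hLj : 2*L + 3 ≤ j := by
    have h4 : 4 ≤ L := by
      have h16 : Nat.log 2 16 = 4 := Nat.log_eq_of_pow_le_of_lt_pow (by norm_num) (by norm_num)
      have : Nat.log 2 16 ≤ L := Nat.log_mono_right hj
      omega
    calc 2*L+3 ≤ 2^L := log_bound L h4
      _ ≤ j := Nat.pow_log_le_self 2 (by omega)
  have hjpow : j^(2*j) ≤ 2^((L+1)*(2*j)) := by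
    have hlt : j < 2^(L+1) := Nat.lt_pow_succ_log_self (by norm_num) j
    calc j^(2*j) ≤ (2^(L+1))^(2*j) := Nat.pow_le_pow_left hlt.le _
      _ = 2^((L+1)*(2*j)) := (pow_mul 2 (L+1) (2*j)).symm
  have h4n : 2^(j^2-2) ≤ 4^n := by
    have h42 : (4:ℕ)^n = 2^(2*n) := by rw [pow_mul]; norm_num
    rw [h42]
    exact Nat.pow_le_pow_right (by omega) (by omega)
  have hfin : 2^(j^2-2) ≤ 2^((L+1)*(2*j)) := le_trans h4n (le_trans hcb (le_trans hjj hjpow))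
  have hexp : j^2 - 2 ≤ (L+1)*(2*j) := (Nat.pow_le_pow_iff_right (by omega)).mp hfin
  have hexp2 : j^2 ≤ (L+1)*(2*j) + 2 := by omega
  nlinarith [hexp2, hLj, hj]

lemma dPrimorial_mono {a b : ℕ} (h : a ≤ b) : dPrimorial a ≤ dPrimorial b := by
  unfold dPrimorial
  apply Finset.prod_le_prod_of_subset_of_one_le' (Finset.range_subset_range.2 h)
  intro i _ _
  exact (Nat.prime_nth_prime i).one_lt.le

lemma dPrimorial_le (j : ℕ) (hj : 16 ≤ j) : dPrimorial j ≤ j^(2*j) := by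
  calc dPrimorial j ≤ ∏ _i ∈ Finset.range j, j^2 := by
        apply Finset.prod_le_prod'
        intro i hi
        have hij : i < Nat.count Nat.Prime (j^2) :=
          lt_of_lt_of_le (Finset.mem_range.1 hi) (count_primes_sq j hj)
        exact (Nat.nth_lt_of_lt_count hij).le
    _ = (j^2)^j := by rw [Finset.prod_const, Finset.card_range]
    _ = j^(2*j) := by rw [← pow_mul]

lemma mult_count (d : ℕ) (hd : 0 < d) (a b : ℝ) (ha : (d:ℝ) ≤ a) (hb : 0 ≤ b)
    (S : Set ℕ) (hfin : S.Finite)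
    (hmem : ∀ n : ℕ, d ∣ n → a ≤ (n:ℝ) → (n:ℝ) ≤ b → n ∈ S) :
    (b - a)/d - 1 ≤ (S.ncard : ℝ) := by
  have hd0 : (0:ℝ) < d := by exact_mod_cast hd
  have ha0 : 0 ≤ a/d := div_nonneg (le_trans hd0.le ha) hd0.le
  set k₁ := ⌈a/d⌉₊ with hk1
  set k₂ := ⌊b/d⌋₊ with hk2
  set F := (Finset.Icc k₁ k₂).image (· * d) with hF
  have hsub : ↑F ⊆ S := by
    intro n hn
    simp only [hF, Finset.coe_image, Set.mem_image, Finset.mem_coe, Finset.mem_Icc] at hn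
    obtain ⟨k, ⟨hk1le, hk2le⟩, rfl⟩ := hn
    refine hmem _ (dvd_mul_left d k) ?_ ?_
    · have hk1' : (k₁:ℝ) ≤ k := by exact_mod_cast hk1le
      have h : a/d ≤ (k:ℝ) := le_trans (Nat.le_ceil _) hk1'
      push_cast
      calc a = (a/d)*d := by field_simp
        _ ≤ (k:ℝ)*d := mul_le_mul_of_nonneg_right h hd0.le
    · have hk2' : (k:ℝ) ≤ k₂ := by exact_mod_cast hk2le
      have h : (k:ℝ) ≤ b/d := le_trans hk2' (Nat.floor_le (div_nonneg hb hd0.le))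
      push_cast
      calc (k:ℝ)*d ≤ (b/d)*d := mul_le_mul_of_nonneg_right h hd0.le
        _ = b := by field_simp
  have hcard : F.card = k₂ + 1 - k₁ := by
    rw [hF, Finset.card_image_of_injective _ (fun x y h => by
      exact Nat.eq_of_mul_eq_mul_right hd h), Nat.card_Icc]
  have hge : (b - a)/d - 1 ≤ (F.card : ℝ) := by
    rw [hcard]
    have h1 : (k₂:ℝ) > b/d - 1 := Nat.sub_one_lt_floor _
    have h2 : (k₁:ℝ) < a/d + 1 := Nat.ceil_lt_add_one ha0
    have h3 : ((k₂ + 1 - k₁ : ℕ) : ℝ) ≥ (k₂:ℝ) + 1 - k₁ := by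
      rcases le_or_gt k₁ (k₂+1) with h | h
      · rw [Nat.cast_sub h]; push_cast; linarith
      · have : k₂ + 1 - k₁ = 0 := by omega
        rw [this]
        push_cast
        have : (k₂:ℝ) + 1 ≤ k₁ := by exact_mod_cast h.le
        simp; linarith
    have : (b-a)/d = b/d - a/d := by ring
    linarith
  calc (b-a)/d - 1 ≤ (F.card : ℝ) := hge
    _ ≤ (S.ncard : ℝ) := by
      exact_mod_cast (Set.ncard_coe_finset F) ▸ Set.ncard_le_ncard hsub hfin

lemma log_le_two_sqrt {y : ℝ} (hy : 1 ≤ y) : Real.log y ≤ 2 * Real.sqrt y := by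
  have h0 : 0 < y := by linarith
  have h1 : Real.log (Real.sqrt y) ≤ Real.sqrt y - 1 :=
    Real.log_le_sub_one_of_pos (Real.sqrt_pos.2 h0)
  have h2 : Real.log (Real.sqrt y) = Real.log y / 2 := Real.log_sqrt h0.le
  linarith


lemma dP_le_exp (k : ℕ) (hk : 16 ≤ k) :
    (dPrimorial k : ℝ) ≤ Real.exp (2 * k * Real.log k) := by
  have h1 : (dPrimorial k : ℝ) ≤ (k:ℝ)^(2*k) := by
    exact_mod_cast dPrimorial_le k hk
  have hk1 : (1:ℝ) ≤ k := by exact_mod_cast (by omega : 1 ≤ k)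
  calc (dPrimorial k : ℝ) ≤ (k:ℝ)^(2*k) := h1
    _ = Real.exp (2 * k * Real.log k) := by
        rw [← Real.exp_log (show (0:ℝ) < (k:ℝ)^(2*k) by positivity), Real.log_pow]
        push_cast
        ring_nf
lemma dP_le_exp_sq (k : ℕ) (hk : 100 ≤ k) :
    8 * (dPrimorial k : ℝ) ≤ Real.exp ((k:ℝ)^2) := by
  have hk1 : (100:ℝ) ≤ k := by exact_mod_cast hk
  have hs : (10:ℝ) ≤ Real.sqrt k := by
    rw [show (10:ℝ) = Real.sqrt 100 by
      rw [show (100:ℝ) = 10^2 by norm_num, Real.sqrt_sq (by norm_num)]]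
    exact Real.sqrt_le_sqrt hk1
  have hsq : Real.sqrt k ^ 2 = (k:ℝ) := Real.sq_sqrt (by linarith)
  have hlog : Real.log k ≤ 2 * Real.sqrt k := log_le_two_sqrt (by linarith)
  have hlog8 : Real.log 8 ≤ 3 := by
    have h2 : Real.log 2 ≤ 1 := by
      have := Real.log_le_sub_one_of_pos (by norm_num : (0:ℝ) < 2)
      linarith
    have : (8:ℝ) = 2^3 := by norm_num
    rw [this, Real.log_pow]
    push_cast; linarith
  have hexp : Real.log 8 + 2 * k * Real.log k ≤ (k:ℝ)^2 := by
    have h2k : (0:ℝ) ≤ 2*(k:ℝ) := by positivity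
    have hprod : 2*(k:ℝ)*Real.log k ≤ 2*(k:ℝ)*(2*Real.sqrt k) := by
      apply mul_le_mul_of_nonneg_left hlog h2k
    set s := Real.sqrt (k:ℝ) with hsdef
    have hcube : 3 ≤ s^4 - 4*s^3 := by
      have hs3 : 1000 ≤ s^3 := by nlinarith [hs]
      have hp2 : 1000*6 ≤ s^3*(s-4) := mul_le_mul hs3 (by linarith) (by linarith) (by nlinarith)
      nlinarith [hp2]
    have hk2 : (k:ℝ)^2 = s^4 := by rw [← hsq]; ring
    have h3 : 2*(k:ℝ)*(2*s) = 4*s^3 := by rw [← hsq]; ring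
    linarith
  calc 8 * (dPrimorial k : ℝ) ≤ 8 * Real.exp (2 * k * Real.log k) := by
        have := dP_le_exp k (by omega)
        linarith
    _ = Real.exp (Real.log 8 + 2 * k * Real.log k) := by
        rw [Real.exp_add, Real.exp_log (by norm_num)]
    _ ≤ Real.exp ((k:ℝ)^2) := Real.exp_le_exp.2 hexp

lemma pow_gap (k m : ℕ) (hm : 2 ≤ m) (hk : 3 ≤ k) : (k-1)^m + 2 ≤ k^m := by
  have hm1 : m - 1 + 1 = m := by omega
  have h1 : (k-1)^m + (k-1)^(m-1) ≤ k^m := by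
    calc (k-1)^m + (k-1)^(m-1) = (k-1)^(m-1)*(k-1) + (k-1)^(m-1) := by
          rw [← pow_succ, hm1]
      _ = (k-1)^(m-1) * ((k-1)+1) := by ring
      _ = (k-1)^(m-1) * k := by congr 1; omega
      _ ≤ k^(m-1) * k := Nat.mul_le_mul_right k (Nat.pow_le_pow_left (by omega) _)
      _ = k^m := by rw [← pow_succ, hm1]
  have h2 : 2 ≤ (k-1)^(m-1) := le_trans (by omega : 2 ≤ k-1) (Nat.le_self_pow (by omega) _)
  omega

theorem stmt_8 (m : ℕ) (hm : 2 ≤ m) :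
    ∃ C : ℝ, 0 < C ∧ ∀ᶠ x : ℝ in atTop,
      C * (x * Real.exp (-(2 / (m : ℝ)) * (Real.log x) ^ ((1 : ℝ) / m) *
          Real.log (Real.log x))) ≤
        (cnt (⋃ j ∈ {j : ℕ | 1 ≤ j}, Bset m j) x : ℝ) := by
  refine ⟨1/16, by norm_num, ?_⟩
  filter_upwards [eventually_ge_atTop (Real.exp ((101:ℝ)^m))] with x hx
  unfold cnt
  set S := {n : ℕ | n ∈ (⋃ j ∈ {j : ℕ | 1 ≤ j}, Bset m j) ∧ 1 ≤ n ∧ (n:ℝ) ≤ x} with hS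
  have hm0 : (m:ℝ) ≠ 0 := by positivity
  have hx1 : (1:ℝ) ≤ x := le_trans (Real.one_le_exp (by positivity)) hx
  have hx0 : (0:ℝ) < x := by linarith
  set L := Real.log x with hL
  have hL101 : (101:ℝ)^m ≤ L := by
    rw [hL, ← Real.log_exp ((101:ℝ)^m)]
    exact Real.log_le_log (Real.exp_pos _) hx
  have hL1 : (1:ℝ) ≤ L := le_trans (one_le_pow₀ (by norm_num)) hL101
  have hL0 : (0:ℝ) ≤ L := by linarith
  set R := L ^ ((1:ℝ)/m) with hR
  have hR0 : (0:ℝ) ≤ R := Real.rpow_nonneg hL0 _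
  have hR101 : (101:ℝ) ≤ R := by
    have h := Real.rpow_le_rpow (by positivity) hL101 (by positivity : (0:ℝ) ≤ 1/m)
    rwa [← Real.rpow_natCast (101:ℝ) m, ← Real.rpow_mul (by norm_num), mul_one_div,
      div_self hm0, Real.rpow_one] at h
  set j := ⌊R⌋₊ with hj
  have hj101 : 101 ≤ j := Nat.le_floor (by exact_mod_cast hR101)
  have hjR : (j:ℝ) ≤ R := Nat.floor_le hR0
  have hRj : R < (j:ℝ) + 1 := Nat.lt_floor_add_one R
  have hj1 : (1:ℝ) ≤ (j:ℝ) := by exact_mod_cast (by omega : 1 ≤ j)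
  have hj101R : (101:ℝ) ≤ (j:ℝ) := by exact_mod_cast hj101
  have hRmL : R^m = L := by
    rw [hR, ← Real.rpow_natCast (L ^ ((1:ℝ)/m)) m, ← Real.rpow_mul hL0, one_div,
      inv_mul_cancel₀ hm0, Real.rpow_one]
  have hjmL : ((j:ℝ))^m ≤ L := by
    calc ((j:ℝ))^m ≤ R^m := pow_le_pow_left₀ (by positivity) hjR m
      _ = L := hRmL
  have hLjm : L < ((j:ℝ)+1)^m := by
    calc L = R^m := hRmL.symm
      _ < ((j:ℝ)+1)^m := pow_lt_pow_left₀ hRj hR0 (by omega)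
  set A := Real.exp ((j:ℝ)^m) with hA
  have hA1 : (1:ℝ) ≤ A := Real.one_le_exp (by positivity)
  have hAx : A ≤ x := by
    rw [hA, ← Real.exp_log hx0]
    exact Real.exp_le_exp.2 hjmL
  have hxA : x < Real.exp (((j:ℝ)+1)^m) := by
    rw [← Real.exp_log hx0]
    exact Real.exp_lt_exp.2 hLjm
  set d := dPrimorial j with hd
  have hd0 : 0 < d := dPrimorial_pos j
  have hdR0 : (0:ℝ) < (d:ℝ) := by exact_mod_cast hd0
  have hdExp : (d:ℝ) ≤ Real.exp (2*j*Real.log j) := dP_le_exp j (by omega)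
  have hjm2 : ((j:ℝ))^2 ≤ ((j:ℝ))^m := pow_le_pow_right₀ hj1 hm
  have hdA : 8*(d:ℝ) ≤ A := by
    calc 8*(d:ℝ) ≤ Real.exp ((j:ℝ)^2) := dP_le_exp_sq j (by omega)
      _ ≤ A := Real.exp_le_exp.2 hjm2
  have hfin : S.Finite := by
    apply Set.Finite.subset (Set.finite_Iic ⌊x⌋₊)
    intro n hn
    exact Set.mem_Iic.2 (Nat.le_floor hn.2.2)
  -- main count bound
  have hcount : x/(4*(d:ℝ)) - 1 ≤ (S.ncard : ℝ) := by
    rcases le_or_gt (2*A) x with hcase | hcase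
    · -- x large in block j: count multiples of d in [A, x]
      have hmem1 : ∀ n : ℕ, d ∣ n → A ≤ (n:ℝ) → (n:ℝ) ≤ x → n ∈ S := by
        intro n hdvd hAn hnx
        have hn1 : 1 ≤ n := by
          have : (1:ℝ) ≤ (n:ℝ) := le_trans hA1 hAn
          exact_mod_cast this
        refine ⟨?_, hn1, hnx⟩
        exact Set.mem_biUnion (show j ∈ {j : ℕ | 1 ≤ j} from (by omega : 1 ≤ j))
          ⟨hdvd, hAn, lt_of_le_of_lt hnx hxA⟩
      have h1 := mult_count d hd0 A x (by linarith) (by linarith) S hfin hmem1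
      have h2 : x/4 ≤ x - A := by linarith
      have h3 : (x/4)/(d:ℝ) ≤ (x - A)/(d:ℝ) := by
        exact div_le_div_of_nonneg_right h2 hdR0.le
      have h4 : x/(4*(d:ℝ)) = (x/4)/(d:ℝ) := by ring
      linarith
    · -- x close to A: count multiples of d' in [a', A-1]
      set j' := j - 1 with hj'
      have hj'100 : 100 ≤ j' := by omega
      have hcast : ((j':ℕ):ℝ) = (j:ℝ) - 1 := by
        rw [hj', Nat.cast_sub (by omega : 1 ≤ j)]
        norm_num
      set d' := dPrimorial j' with hd'
      have hd'0 : 0 < d' := dPrimorial_pos j'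
      have hd'R0 : (0:ℝ) < (d':ℝ) := by exact_mod_cast hd'0
      have hd'd : (d':ℝ) ≤ (d:ℝ) := by exact_mod_cast dPrimorial_mono (by omega : j' ≤ j)
      set a := Real.exp (((j:ℝ)-1)^m) with ha
      have ha1 : (1:ℝ) ≤ a := Real.one_le_exp (pow_nonneg (by linarith [hj101R]) m)
      have hgap : ((j:ℝ)-1)^m + 2 ≤ (j:ℝ)^m := by
        have h := pow_gap j m hm (by omega)
        have h2 : (((j-1:ℕ):ℝ))^m + 2 ≤ ((j:ℝ))^m := by exact_mod_cast h
        rwa [Nat.cast_sub (by omega : 1 ≤ j), Nat.cast_one] at h2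
      have he2 : (4:ℝ) ≤ Real.exp 2 := by
        have h1 : (2:ℝ) ≤ Real.exp 1 := by
          have := Real.add_one_le_exp 1
          linarith
        have h2 : Real.exp 2 = Real.exp 1 * Real.exp 1 := by
          rw [← Real.exp_add]; norm_num
        nlinarith [Real.exp_pos 1]
      have hea : (0:ℝ) < a := by rw [ha]; exact Real.exp_pos _
      have haA4 : a ≤ A/4 := by
        have h1 : a * Real.exp 2 ≤ A := by
          rw [ha, hA, ← Real.exp_add]
          exact Real.exp_le_exp.2 (by linarith)
        have h2 : a * 4 ≤ a * Real.exp 2 := mul_le_mul_of_nonneg_left he2 hea.le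
        linarith
      have hA4 : (4:ℝ) ≤ A := by
        have h1 : (2:ℝ) ≤ (j:ℝ)^m := by
          calc (2:ℝ) ≤ (j:ℝ) := by linarith [hj101R]
            _ = (j:ℝ)^1 := (pow_one _).symm
            _ ≤ (j:ℝ)^m := pow_le_pow_right₀ hj1 (by omega)
        calc (4:ℝ) ≤ Real.exp 2 := he2
          _ ≤ A := Real.exp_le_exp.2 h1
      have hd'a : 8*(d':ℝ) ≤ a := by
        calc 8*(d':ℝ) ≤ Real.exp (((j':ℕ):ℝ)^2) := dP_le_exp_sq j' hj'100
          _ ≤ Real.exp (((j':ℕ):ℝ)^m) := by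
              apply Real.exp_le_exp.2
              apply pow_le_pow_right₀ _ hm
              rw [hcast]; linarith
          _ = a := by rw [ha, hcast]
      have hmem2 : ∀ n : ℕ, d' ∣ n → a ≤ (n:ℝ) → (n:ℝ) ≤ A - 1 → n ∈ S := by
        intro n hdvd han hnA
        have hn1 : 1 ≤ n := by
          have : (1:ℝ) ≤ (n:ℝ) := le_trans ha1 han
          exact_mod_cast this
        refine ⟨?_, hn1, by linarith⟩
        refine Set.mem_biUnion (show j' ∈ {j : ℕ | 1 ≤ j} from (by omega : 1 ≤ j')) ?_
        refine ⟨hdvd, ?_, ?_⟩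
        · rw [hcast]; rw [ha] at han; exact han
        · rw [hcast]
          have : (j:ℝ) - 1 + 1 = (j:ℝ) := by ring
          rw [this, ← hA]
          linarith
      have h1 := mult_count d' hd'0 a (A-1) (by linarith) (by linarith) S hfin hmem2
      have hnum : x/4 ≤ A - 1 - a := by linarith
      have h3 : (x/4)/(d:ℝ) ≤ (x/4)/(d':ℝ) := by
        apply div_le_div_of_nonneg_left (by linarith) hd'R0 hd'd
      have h4 : (x/4)/(d':ℝ) ≤ (A - 1 - a)/(d':ℝ) := div_le_div_of_nonneg_right hnum hd'R0.le
      have h5 : x/(4*(d:ℝ)) = (x/4)/(d:ℝ) := by ring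
      linarith
  -- final assembly
  have hexps : 2*(j:ℝ)*Real.log j ≤ (2/(m:ℝ))*R*Real.log L := by
    have hlogj0 : (0:ℝ) ≤ Real.log j := Real.log_nonneg hj1
    have hlogL0 : (0:ℝ) ≤ Real.log L := Real.log_nonneg hL1
    have hlogL : (m:ℝ)*Real.log j ≤ Real.log L := by
      have h1 : Real.log ((j:ℝ)^m) ≤ Real.log L := Real.log_le_log (by positivity) hjmL
      rwa [Real.log_pow] at h1
    have hm0' : (0:ℝ) < (m:ℝ) := by positivity
    calc 2*(j:ℝ)*Real.log j = (2/(m:ℝ))*(j:ℝ)*((m:ℝ)*Real.log j) := by field_simp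
      _ ≤ (2/(m:ℝ))*(j:ℝ)*Real.log L := by
          apply mul_le_mul_of_nonneg_left hlogL (by positivity)
      _ ≤ (2/(m:ℝ))*R*Real.log L := by
          apply mul_le_mul_of_nonneg_right _ hlogL0
          apply mul_le_mul_of_nonneg_left hjR (by positivity)
  have hdE : (d:ℝ) ≤ Real.exp ((2/(m:ℝ))*R*Real.log L) := by
    calc (d:ℝ) ≤ Real.exp (2*j*Real.log j) := hdExp
      _ ≤ _ := Real.exp_le_exp.2 hexps
  have hEneg : Real.exp (-(2/(m:ℝ)) * R * Real.log L) * (d:ℝ) ≤ 1 := by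
    have h1 : Real.exp (-(2/(m:ℝ)) * R * Real.log L) * Real.exp ((2/(m:ℝ))*R*Real.log L) = 1 := by
      rw [← Real.exp_add]; ring_nf; exact Real.exp_zero
    calc Real.exp (-(2/(m:ℝ)) * R * Real.log L) * (d:ℝ)
        ≤ Real.exp (-(2/(m:ℝ)) * R * Real.log L) * Real.exp ((2/(m:ℝ))*R*Real.log L) := by
          apply mul_le_mul_of_nonneg_left hdE (Real.exp_pos _).le
      _ = 1 := h1
  set E := Real.exp (-(2/(m:ℝ)) * R * Real.log L) with hE
  have hE0 : (0:ℝ) < E := Real.exp_pos _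
  have hxE : x * E ≤ x / d := by
    rw [le_div_iff₀ hdR0]
    calc x * E * d = x * (E * d) := by ring
      _ ≤ x * 1 := mul_le_mul_of_nonneg_left hEneg hx0.le
      _ = x := mul_one x
  have hx8d : (1:ℝ) ≤ x/(8*(d:ℝ)) := by
    rw [le_div_iff₀ (by positivity)]
    calc 1 * (8*(d:ℝ)) = 8*(d:ℝ) := one_mul _
      _ ≤ A := hdA
      _ ≤ x := hAx
  calc (1/16) * (x * E) ≤ (1/16) * (x/d) := by
        apply mul_le_mul_of_nonneg_left hxE (by norm_num)
    _ = x/(8*(d:ℝ)) / 2 := by ring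
    _ ≤ x/(4*(d:ℝ)) - 1 := by
        have : x/(4*(d:ℝ)) = 2 * (x/(8*(d:ℝ))) := by ring
        rw [this]
        linarith
    _ ≤ (S.ncard : ℝ) := hcount
end

section
/- For every real x ≥ 1 and every real z ≥ 2, the number of positive integers n ≤ x that are coprime to every prime p ≤ z satisfies #{n ≤ x : gcd(n, ∏_{p ≤ z} p) = 1} ≤ x·∏_{p ≤ z}(1 − 1/p) + 2^{π(z)}, where π(z) is the number of primes not exceeding z. -/
open Filter Real

/-- The finset of primes `p ≤ z` for a real number `z`. -/
noncomputable def primesLe (z : ℝ) : Finset ℕ := (Finset.range (⌊z⌋₊ + 1)).filter Nat.Prime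

lemma prod_neg_aux (S : Finset ℕ) (f : ℕ → ℝ) :
    ∏ i ∈ S, -(f i) = (-1) ^ S.card * ∏ i ∈ S, f i := by
  rw [← Finset.prod_const, ← Finset.prod_mul_distrib]
  exact Finset.prod_congr rfl fun i _ => (neg_one_mul _).symm

theorem stmt_10 (x : ℝ) (hx : 1 ≤ x) (z : ℝ) (hz : 2 ≤ z) :
    ({n : ℕ | 1 ≤ n ∧ (n : ℝ) ≤ x ∧
        Nat.Coprime n (∏ p ∈ primesLe z, p)}.ncard : ℝ) ≤
      x * ∏ p ∈ primesLe z, (1 - 1 / (p : ℝ)) + 2 ^ (primesLe z).card := by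
  classical
  set T := primesLe z with hT
  set N := ⌊x⌋₊ with hN
  have hx0 : (0:ℝ) ≤ x := le_trans zero_le_one hx
  have hTp : ∀ p ∈ T, Nat.Prime p := fun p hp => (Finset.mem_filter.mp hp).2
  set P := ∏ p ∈ T, p with hP
  set F := (Finset.Ioc 0 N).filter (fun n => Nat.Coprime n P) with hF
  -- identify the set with the finset F
  have hset : {n : ℕ | 1 ≤ n ∧ (n : ℝ) ≤ x ∧ Nat.Coprime n P} = ↑F := by
    ext n
    simp only [Set.mem_setOf_eq, hF, Finset.coe_filter, Finset.mem_Ioc,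
      Set.mem_setOf_eq, Nat.lt_iff_add_one_le, zero_add, hN, Nat.le_floor_iff hx0, and_assoc]
  rw [hset, Set.ncard_coe_finset]
  -- indicator identity
  have hind : ∀ n ∈ Finset.Ioc 0 N, (if Nat.Coprime n P then (1:ℝ) else 0)
      = ∏ p ∈ T, (-(if p ∣ n then (1:ℝ) else 0) + 1) := by
    intro n _
    by_cases h : Nat.Coprime n P
    · rw [if_pos h, Finset.prod_eq_one]
      intro p hp
      rw [if_neg, neg_zero, zero_add]
      exact (hTp p hp).coprime_iff_not_dvd.mp
        ((Nat.coprime_prod_right_iff.mp h p hp).symm)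
    · rw [if_neg h]
      obtain ⟨p, hp, hd⟩ : ∃ p ∈ T, p ∣ n := by
        by_contra hc
        push_neg at hc
        exact h (Nat.coprime_prod_right_iff.mpr fun p hp =>
          ((hTp p hp).coprime_iff_not_dvd.mpr (hc p hp)).symm)
      exact (Finset.prod_eq_zero hp (by rw [if_pos hd]; ring)).symm
  -- product of indicators over a subset S is the indicator of divisibility by ∏ S
  have hdvd : ∀ S ∈ T.powerset, ∀ n : ℕ,
      (∏ p ∈ S, (if p ∣ n then (1:ℝ) else 0)) = if (∏ p ∈ S, p) ∣ n then 1 else 0 := by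
    intro S hS n
    have hSp : ∀ p ∈ S, Nat.Prime p := fun p hp => hTp p (Finset.mem_powerset.mp hS hp)
    by_cases hd : (∏ p ∈ S, p) ∣ n
    · rw [if_pos hd, Finset.prod_eq_one]
      intro p hp
      exact if_pos ((Finset.dvd_prod_of_mem _ hp).trans hd)
    · obtain ⟨p, hp, hnd⟩ : ∃ p ∈ S, ¬ p ∣ n := by
        by_contra hc
        push_neg at hc
        exact hd (Finset.prod_primes_dvd n (fun p hp => (hSp p hp).prime) hc)
      rw [if_neg hd]
      exact Finset.prod_eq_zero hp (if_neg hnd)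
  -- the main counting identity
  have hcard : (F.card : ℝ)
      = ∑ S ∈ T.powerset, (-1) ^ S.card * ((N / ∏ p ∈ S, p : ℕ) : ℝ) := by
    have h1 : (F.card : ℝ) = ∑ n ∈ Finset.Ioc 0 N, if Nat.Coprime n P then (1:ℝ) else 0 := by
      rw [Finset.sum_boole, hF]
    rw [h1, Finset.sum_congr rfl hind]
    have h2 : ∀ n ∈ Finset.Ioc 0 N, ∏ p ∈ T, (-(if p ∣ n then (1:ℝ) else 0) + 1)
        = ∑ S ∈ T.powerset, (-1) ^ S.card * (if (∏ p ∈ S, p) ∣ n then (1:ℝ) else 0) := by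
      intro n _
      rw [Finset.prod_add]
      refine Finset.sum_congr rfl fun S hS => ?_
      rw [Finset.prod_const_one, mul_one, prod_neg_aux, hdvd S hS n]
    rw [Finset.sum_congr rfl h2, Finset.sum_comm]
    refine Finset.sum_congr rfl fun S hS => ?_
    rw [← Finset.mul_sum, Finset.sum_boole, Nat.Ioc_filter_dvd_card_eq_div]
  -- the main term identity
  have hmain : x * ∏ p ∈ T, (1 - 1 / (p : ℝ))
      = ∑ S ∈ T.powerset, (-1) ^ S.card * (x / ((∏ p ∈ S, p : ℕ) : ℝ)) := by
    have : ∀ p ∈ T, (1 - 1 / (p : ℝ)) = -(1 / (p:ℝ)) + 1 := fun p _ => by ring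
    rw [Finset.prod_congr rfl this, Finset.prod_add, Finset.mul_sum]
    refine Finset.sum_congr rfl fun S hS => ?_
    rw [Finset.prod_const_one, mul_one, prod_neg_aux]
    have : ∏ p ∈ S, (1 / (p:ℝ)) = 1 / ((∏ p ∈ S, p : ℕ) : ℝ) := by
      push_cast
      simp [one_div, Finset.prod_inv_distrib]
    rw [this]; ring
  -- error bound for each subset
  have hkey : ∀ S ∈ T.powerset,
      |((N / ∏ p ∈ S, p : ℕ) : ℝ) - x / ((∏ p ∈ S, p : ℕ) : ℝ)| ≤ 1 := by
    intro S hS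
    set d := ∏ p ∈ S, p with hd
    have hd1 : 1 ≤ d := Nat.one_le_iff_ne_zero.mpr (Finset.prod_ne_zero_iff.mpr
      fun p hp => (hTp p (Finset.mem_powerset.mp hS hp)).pos.ne')
    have hdR : (1:ℝ) ≤ (d:ℝ) := by exact_mod_cast hd1
    have hdpos : (0:ℝ) < (d:ℝ) := lt_of_lt_of_le one_pos hdR
    rw [abs_le]
    constructor
    · -- -1 ≤ cast - x/d  i.e.  x/d - 1 ≤ cast
      have h1 : x - 1 < (N : ℝ) := by
        rw [hN]; exact Nat.sub_one_lt_floor x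
      have h2 : N ≤ d * (N / d) + (d - 1) := by
        have := Nat.div_add_mod N d
        have hmod : N % d ≤ d - 1 := Nat.le_sub_one_of_lt (Nat.mod_lt _ hd1)
        omega
      have h3 : (N : ℝ) ≤ (d:ℝ) * ((N / d : ℕ):ℝ) + ((d:ℝ) - 1) := by
        have := (Nat.cast_le (α := ℝ)).mpr h2
        push_cast at this
        rw [Nat.cast_sub hd1] at this
        push_cast at this
        linarith
      have : x / (d:ℝ) - 1 ≤ ((N / d : ℕ):ℝ) := by
        rw [div_sub_one hdpos.ne', div_le_iff₀ hdpos]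
        nlinarith
      linarith
    · -- cast - x/d ≤ 1
      have h1 : ((N / d : ℕ):ℝ) ≤ (N:ℝ) / (d:ℝ) := Nat.cast_div_le
      have h2 : (N:ℝ) ≤ x := Nat.floor_le hx0
      have : (N:ℝ) / (d:ℝ) ≤ x / (d:ℝ) := by gcongr
      linarith
  -- conclude
  have hbound : (F.card : ℝ) - x * ∏ p ∈ T, (1 - 1 / (p : ℝ)) ≤ 2 ^ T.card := by
    rw [hcard, hmain, ← Finset.sum_sub_distrib]
    calc ∑ S ∈ T.powerset, ((-1) ^ S.card * ((N / ∏ p ∈ S, p : ℕ) : ℝ)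
            - (-1) ^ S.card * (x / ((∏ p ∈ S, p : ℕ) : ℝ)))
        ≤ ∑ S ∈ T.powerset, |(-1) ^ S.card * ((N / ∏ p ∈ S, p : ℕ) : ℝ)
            - (-1) ^ S.card * (x / ((∏ p ∈ S, p : ℕ) : ℝ))| :=
          Finset.sum_le_sum fun S _ => le_abs_self _
      _ ≤ ∑ _S ∈ T.powerset, (1:ℝ) := by
          refine Finset.sum_le_sum fun S hS => ?_
          rw [← mul_sub, abs_mul, abs_pow, abs_neg, abs_one, one_pow, one_mul]
          exact hkey S hS
      _ = 2 ^ T.card := by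
          rw [Finset.sum_const, Finset.card_powerset]
          simp
  linarith
end
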